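/- For any rule R of a mini-gringo program, the infinitary propositional formula (τ*R)^prop obtained by applying the grounding translation to the first-order translation τ*R is strongly equivalent to the propositional translation τR of R. -/

import Mathlib

/-! # mini-gringo and the two-sorted signature σ₀ -/

/-- Precomputed terms: numerals and symbolic constants. -/
inductive PTerm : Type
  | num : ℤ → PTerm
  | sym : String → PTerm
deriving DecidableEq

/-- A total order on precomputed terms such that `num m ≤ num n` iff `m ≤ n`. -/
def PTerm.le : PTerm → PTerm → Prop
  | .num m, .num n => m ≤ n
  | .num _, .sym _ => True
  | .sym _, .num _ => False
  | .sym s, .sym t => s ≤ t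

/-- Comparison symbols. -/
inductive CRel : Type
  | req | rne | rlt | rgt | rle | rge
deriving DecidableEq

def CRel.holds : CRel → PTerm → PTerm → Prop
  | .req, a, b => a = b
  | .rne, a, b => a ≠ b
  | .rlt, a, b => PTerm.le a b ∧ a ≠ b
  | .rgt, a, b => PTerm.le b a ∧ a ≠ b
  | .rle, a, b => PTerm.le a b
  | .rge, a, b => PTerm.le b a

/-- mini-gringo terms (with general variables represented by natural numbers). -/
inductive MGT : Type
  | pre : PTerm → MGT
  | var : ℕ → MGT
  | abs : MGT → MGT
  | add : MGT → MGT → MGT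
  | sub : MGT → MGT → MGT
  | mul : MGT → MGT → MGT
  | div : MGT → MGT → MGT
  | mod : MGT → MGT → MGT
  | intv : MGT → MGT → MGT

/-- Truncation toward zero, as performed by gringo. -/
def tdiv (m n : ℤ) : ℤ := Int.tdiv m n

/-- The set of values `[t]` of a (ground) term. -/
def MGT.vals : MGT → Set PTerm
  | .pre p => {p}
  | .var _ => ∅
  | .abs t => {q | ∃ n : ℤ, PTerm.num n ∈ t.vals ∧ q = .num |n|}
  | .add t u => {q | ∃ m n : ℤ, PTerm.num m ∈ t.vals ∧ PTerm.num n ∈ u.vals ∧ q = .num (m + n)}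
  | .sub t u => {q | ∃ m n : ℤ, PTerm.num m ∈ t.vals ∧ PTerm.num n ∈ u.vals ∧ q = .num (m - n)}
  | .mul t u => {q | ∃ m n : ℤ, PTerm.num m ∈ t.vals ∧ PTerm.num n ∈ u.vals ∧ q = .num (m * n)}
  | .div t u => {q | ∃ m n : ℤ, PTerm.num m ∈ t.vals ∧ PTerm.num n ∈ u.vals ∧ n ≠ 0 ∧
      q = .num (tdiv m n)}
  | .mod t u => {q | ∃ m n : ℤ, PTerm.num m ∈ t.vals ∧ PTerm.num n ∈ u.vals ∧ n ≠ 0 ∧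
      q = .num (m - n * tdiv m n)}
  | .intv t u => {q | ∃ m n k : ℤ, PTerm.num m ∈ t.vals ∧ PTerm.num n ∈ u.vals ∧
      m ≤ k ∧ k ≤ n ∧ q = .num k}

/-- Values of a tuple of ground terms. -/
def valsList : List MGT → Set (List PTerm)
  | [] => {[]}
  | t :: ts => {rs | ∃ r rs', r ∈ t.vals ∧ rs' ∈ valsList ts ∧ rs = r :: rs'}

/-- `t` is ground (contains no variables). -/
def MGT.ground : MGT → Prop
  | .pre _ => True
  | .var _ => False
  | .abs t => t.ground
  | .add t u | .sub t u | .mul t u | .div t u | .mod t u | .intv t u => t.ground ∧ u.ground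

/-- Substituting precomputed terms for variables. -/
def MGT.subst (σ : ℕ → PTerm) : MGT → MGT
  | .pre p => .pre p
  | .var n => .pre (σ n)
  | .abs t => .abs (t.subst σ)
  | .add t u => .add (t.subst σ) (u.subst σ)
  | .sub t u => .sub (t.subst σ) (u.subst σ)
  | .mul t u => .mul (t.subst σ) (u.subst σ)
  | .div t u => .div (t.subst σ) (u.subst σ)
  | .mod t u => .mod (t.subst σ) (u.subst σ)
  | .intv t u => .intv (t.subst σ) (u.subst σ)

/-- Applying a valuation (a map on symbolic constants) to a term. -/
def MGT.appV (v : String → PTerm) : MGT → MGT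
  | .pre (.sym c) => .pre (v c)
  | .pre p => .pre p
  | .var n => .var n
  | .abs t => .abs (t.appV v)
  | .add t u => .add (t.appV v) (u.appV v)
  | .sub t u => .sub (t.appV v) (u.appV v)
  | .mul t u => .mul (t.appV v) (u.appV v)
  | .div t u => .div (t.appV v) (u.appV v)
  | .mod t u => .mod (t.appV v) (u.appV v)
  | .intv t u => .intv (t.appV v) (u.appV v)

/-- Bound on variable indices occurring in a term. -/
def MGT.vb : MGT → ℕ
  | .pre _ => 0
  | .var n => n + 1
  | .abs t => t.vb
  | .add t u | .sub t u | .mul t u | .div t u | .mod t u | .intv t u => max t.vb u.vb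

/-- Atoms `p(t₁,…,tₙ)`. -/
structure MAtom : Type where
  p : String
  args : List MGT

/-- The predicate symbol `p/n` of an atom. -/
def MAtom.pn (a : MAtom) : String × ℕ := (a.p, a.args.length)

inductive MLit : Type
  | pos : MAtom → MLit
  | neg : MAtom → MLit
  | nneg : MAtom → MLit

structure MComp : Type where
  rel : CRel
  l : MGT
  r : MGT

inductive MBodyElem : Type
  | lit : MLit → MBodyElem
  | cmp : MComp → MBodyElem

inductive MHead : Type
  | basic : MAtom → MHead
  | choice : MAtom → MHead
  | cons : MHead

structure MRule : Type where
  head : MHead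
  body : List MBodyElem

abbrev MProgram := List MRule

def MAtom.subst (σ : ℕ → PTerm) (a : MAtom) : MAtom := ⟨a.p, a.args.map (MGT.subst σ)⟩
def MAtom.appV (v : String → PTerm) (a : MAtom) : MAtom := ⟨a.p, a.args.map (MGT.appV v)⟩

def MLit.subst (σ : ℕ → PTerm) : MLit → MLit
  | .pos a => .pos (a.subst σ)
  | .neg a => .neg (a.subst σ)
  | .nneg a => .nneg (a.subst σ)
def MLit.appV (v : String → PTerm) : MLit → MLit
  | .pos a => .pos (a.appV v)
  | .neg a => .neg (a.appV v)
  | .nneg a => .nneg (a.appV v)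

def MComp.subst (σ : ℕ → PTerm) (c : MComp) : MComp := ⟨c.rel, c.l.subst σ, c.r.subst σ⟩
def MComp.appV (v : String → PTerm) (c : MComp) : MComp := ⟨c.rel, c.l.appV v, c.r.appV v⟩

def MBodyElem.subst (σ : ℕ → PTerm) : MBodyElem → MBodyElem
  | .lit l => .lit (l.subst σ)
  | .cmp c => .cmp (c.subst σ)
def MBodyElem.appV (v : String → PTerm) : MBodyElem → MBodyElem
  | .lit l => .lit (l.appV v)
  | .cmp c => .cmp (c.appV v)

def MHead.subst (σ : ℕ → PTerm) : MHead → MHead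
  | .basic a => .basic (a.subst σ)
  | .choice a => .choice (a.subst σ)
  | .cons => .cons
def MHead.appV (v : String → PTerm) : MHead → MHead
  | .basic a => .basic (a.appV v)
  | .choice a => .choice (a.appV v)
  | .cons => .cons

def MRule.subst (σ : ℕ → PTerm) (R : MRule) : MRule :=
  ⟨R.head.subst σ, R.body.map (MBodyElem.subst σ)⟩
def MRule.appV (v : String → PTerm) (R : MRule) : MRule :=
  ⟨R.head.appV v, R.body.map (MBodyElem.appV v)⟩

/-- Bound on variable indices of a rule. -/
def MAtom.vb (a : MAtom) : ℕ := (a.args.map MGT.vb).foldr max 0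
def MLit.vb : MLit → ℕ
  | .pos a | .neg a | .nneg a => a.vb
def MBodyElem.vb : MBodyElem → ℕ
  | .lit l => l.vb
  | .cmp c => max c.l.vb c.r.vb
def MHead.vb : MHead → ℕ
  | .basic a | .choice a => a.vb
  | .cons => 0
def MRule.vb (R : MRule) : ℕ := max R.head.vb ((R.body.map MBodyElem.vb).foldr max 0)

/-- Precomputed (ground) atoms. -/
abbrev GAtom := String × List PTerm

/-! ## Infinitary propositional formulas and their stable models -/

inductive IProp (A : Type) : Type 1
  | atom : A → IProp A
  | bot : IProp A
  | conj : (ι : Type) → (ι → IProp A) → IProp A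
  | disj : (ι : Type) → (ι → IProp A) → IProp A
  | impl : IProp A → IProp A → IProp A

/-- Satisfaction in the infinitary logic of here-and-there, for an HT-interpretation
`⟨Hs, Ts⟩` with `Hs ⊆ Ts`. -/
def IProp.htSat {A : Type} (Hs Ts : Set A) : IProp A → Prop
  | .atom a => a ∈ Hs
  | .bot => False
  | .conj _ f => ∀ i, (f i).htSat Hs Ts
  | .disj _ f => ∃ i, (f i).htSat Hs Ts
  | .impl F G => ((F.htSat Hs Ts) → (G.htSat Hs Ts)) ∧ ((F.htSat Ts Ts) → (G.htSat Ts Ts))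

def IProp.top {A : Type} : IProp A := .conj PEmpty (fun x => x.elim)

/-- Stable models (answer sets) of a set of infinitary propositional formulas. -/
def StablePropSet {A : Type} (X : Set (IProp A)) (J : Set A) : Prop :=
  (∀ φ ∈ X, φ.htSat J J) ∧ ∀ H : Set A, H ⊂ J → ¬ ∀ φ ∈ X, φ.htSat H J

/-- Strong equivalence of infinitary propositional formulas: they have the same
HT-models. -/
def StrongEquivProp {A : Type} (F G : IProp A) : Prop :=
  ∀ Hs Ts : Set A, Hs ⊆ Ts → (F.htSat Hs Ts ↔ G.htSat Hs Ts)

/-! ## The translation τ -/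

open scoped Classical in
noncomputable def tauLit : MLit → IProp GAtom
  | .pos a => .disj {rs // rs ∈ valsList a.args} fun rs => .atom (a.p, rs.1)
  | .neg a => .disj {rs // rs ∈ valsList a.args} fun rs => .impl (.atom (a.p, rs.1)) .bot
  | .nneg a => .disj {rs // rs ∈ valsList a.args} fun rs =>
      .impl (.impl (.atom (a.p, rs.1)) .bot) .bot

open scoped Classical in
noncomputable def tauCmp (c : MComp) : IProp GAtom :=
  if ∃ r1 ∈ c.l.vals, ∃ r2 ∈ c.r.vals, c.rel.holds r1 r2 then IProp.top else .bot

noncomputable def tauBodyElem : MBodyElem → IProp GAtom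
  | .lit l => tauLit l
  | .cmp c => tauCmp c

noncomputable def tauBody (b : List MBodyElem) : IProp GAtom :=
  .conj {e // e ∈ b} fun e => tauBodyElem e.1

/-- The translation τ of a ground rule. -/
noncomputable def tauRule (R : MRule) : IProp GAtom :=
  match R.head with
  | .basic a => .impl (tauBody R.body)
      (.conj {rs // rs ∈ valsList a.args} fun rs => .atom (a.p, rs.1))
  | .choice a => .impl (tauBody R.body)
      (.conj {rs // rs ∈ valsList a.args} fun rs =>
        .disj Bool fun bb =>
          cond bb (.atom (a.p, rs.1)) (.impl (.atom (a.p, rs.1)) .bot))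
  | .cons => .impl (tauBody R.body) .bot

/-- `τPrg`: translations of all instances of the rules of `Prg`. -/
noncomputable def tauProg (Prg : MProgram) : Set (IProp GAtom) :=
  {φ | ∃ R ∈ Prg, ∃ σ : ℕ → PTerm, φ = tauRule (R.subst σ)}

/-- Stable models of a mini-gringo program. -/
noncomputable def ProgStable (Prg : MProgram) (J : Set GAtom) : Prop :=
  StablePropSet (tauProg Prg) J

/-! ## First-order formulas over σ₀ -/

/-- Terms of the integer sort. -/
inductive ITm : Type
  | const : ℤ → ITm
  | var : ℕ → ITm
  | abs : ITm → ITm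
  | add : ITm → ITm → ITm
  | sub : ITm → ITm → ITm
  | mul : ITm → ITm → ITm

def ITm.eval (η : ℕ → ℤ) : ITm → ℤ
  | .const n => n
  | .var n => η n
  | .abs t => |t.eval η|
  | .add t u => t.eval η + u.eval η
  | .sub t u => t.eval η - u.eval η
  | .mul t u => t.eval η * u.eval η

/-- Terms of the general sort (with the integer sort as a subsort). -/
inductive GTm : Type
  | int : ITm → GTm
  | pre : PTerm → GTm
  | var : ℕ → GTm

/-- Evaluation of a general term, given a valuation `v` interpreting symbolic constants
and assignments `ξ` (general variables) and `η` (integer variables). -/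
def GTm.eval (v : String → PTerm) (ξ : ℕ → PTerm) (η : ℕ → ℤ) : GTm → PTerm
  | .int t => .num (t.eval η)
  | .pre (.sym c) => v c
  | .pre p => p
  | .var n => ξ n

/-- First-order formulas over the two-sorted signature σ₀. -/
inductive S0F : Type
  | patom : String → List GTm → S0F
  | cmp : CRel → GTm → GTm → S0F
  | bot : S0F
  | and : S0F → S0F → S0F
  | or : S0F → S0F → S0F
  | imp : S0F → S0F → S0F
  | allG : ℕ → S0F → S0F
  | exG : ℕ → S0F → S0F
  | allI : ℕ → S0F → S0F
  | exI : ℕ → S0F → S0F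

/-- Classical satisfaction over the interpretation of σ₀ that is standard for the
placeholders interpreted by `v`, with the precomputed atoms in `J` true. -/
def S0F.sat (v : String → PTerm) (J : Set GAtom) :
    (ξ : ℕ → PTerm) → (η : ℕ → ℤ) → S0F → Prop
  | ξ, η, .patom p ts => (p, ts.map (GTm.eval v ξ η)) ∈ J
  | ξ, η, .cmp r a b => r.holds (a.eval v ξ η) (b.eval v ξ η)
  | _, _, .bot => False
  | ξ, η, .and F G => F.sat v J ξ η ∧ G.sat v J ξ η
  | ξ, η, .or F G => F.sat v J ξ η ∨ G.sat v J ξ η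
  | ξ, η, .imp F G => F.sat v J ξ η → G.sat v J ξ η
  | ξ, η, .allG n F => ∀ d : PTerm, F.sat v J (Function.update ξ n d) η
  | ξ, η, .exG n F => ∃ d : PTerm, F.sat v J (Function.update ξ n d) η
  | ξ, η, .allI n F => ∀ i : ℤ, F.sat v J ξ (Function.update η n i)
  | ξ, η, .exI n F => ∃ i : ℤ, F.sat v J ξ (Function.update η n i)

/-- Here-and-there satisfaction over σ₀ (all predicate symbols `p/n` intensional,
comparisons extensional), for the HT-interpretation `⟨Hs, J⟩`. -/
def S0F.htSat (v : String → PTerm) (Hs J : Set GAtom) :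
    (ξ : ℕ → PTerm) → (η : ℕ → ℤ) → S0F → Prop
  | ξ, η, .patom p ts => (p, ts.map (GTm.eval v ξ η)) ∈ Hs
  | ξ, η, .cmp r a b => r.holds (a.eval v ξ η) (b.eval v ξ η)
  | _, _, .bot => False
  | ξ, η, .and F G => F.htSat v Hs J ξ η ∧ G.htSat v Hs J ξ η
  | ξ, η, .or F G => F.htSat v Hs J ξ η ∨ G.htSat v Hs J ξ η
  | ξ, η, .imp F G => (F.htSat v Hs J ξ η → G.htSat v Hs J ξ η) ∧ (F.sat v J ξ η → G.sat v J ξ η)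
  | ξ, η, .allG n F => ∀ d : PTerm, F.htSat v Hs J (Function.update ξ n d) η
  | ξ, η, .exG n F => ∃ d : PTerm, F.htSat v Hs J (Function.update ξ n d) η
  | ξ, η, .allI n F => ∀ i : ℤ, F.htSat v Hs J ξ (Function.update η n i)
  | ξ, η, .exI n F => ∃ i : ℤ, F.htSat v Hs J ξ (Function.update η n i)

/-- The valuation of standard interpretations: every constant denotes itself. -/
def symv : String → PTerm := fun c => .sym c

def xi0 : ℕ → PTerm := fun _ => .num 0
def eta0 : ℕ → ℤ := fun _ => 0

/-- `I` (determined by `v` and `J`) is a stable model of the set `Γ` of σ₀-sentences,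
relative to the assignments `ξ`, `η`. -/
def FOStable (v : String → PTerm) (Γ : Set S0F) (J : Set GAtom)
    (ξ : ℕ → PTerm) (η : ℕ → ℤ) : Prop :=
  (∀ F ∈ Γ, F.sat v J ξ η) ∧
  ∀ Hs : Set GAtom, Hs ⊂ J → ¬ ∀ F ∈ Γ, F.htSat v Hs J ξ η

/-! ## The translations val, τ^B and τ* -/

def S0F.top : S0F := .imp .bot .bot

/-- Negation. -/
def S0F.neg (F : S0F) : S0F := .imp F .bot

/-- The formula `val_t(V)`, with fresh integer variables numbered from `i` on. -/
def valF : MGT → GTm → ℕ → S0F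
  | .pre p, V, _ => .cmp .req V (.pre p)
  | .var n, V, _ => .cmp .req V (.var n)
  | .abs t, V, i =>
      .exI i (.and (valF t (.int (.var i)) (i + 1))
        (.cmp .req V (.int (.abs (.var i)))))
  | .add t u, V, i =>
      .exI i (.exI (i + 1)
        (.and (valF t (.int (.var i)) (i + 2))
        (.and (valF u (.int (.var (i + 1))) (i + 2))
          (.cmp .req V (.int (.add (.var i) (.var (i + 1))))))))
  | .sub t u, V, i =>
      .exI i (.exI (i + 1)
        (.and (valF t (.int (.var i)) (i + 2))
        (.and (valF u (.int (.var (i + 1))) (i + 2))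
          (.cmp .req V (.int (.sub (.var i) (.var (i + 1))))))))
  | .mul t u, V, i =>
      .exI i (.exI (i + 1)
        (.and (valF t (.int (.var i)) (i + 2))
        (.and (valF u (.int (.var (i + 1))) (i + 2))
          (.cmp .req V (.int (.mul (.var i) (.var (i + 1))))))))
  | .div t u, V, i =>
      .exI i (.exI (i + 1) (.exI (i + 2)
        (.and (valF t (.int (.var i)) (i + 3))
        (.and (valF u (.int (.var (i + 1))) (i + 3))
        (.and (.cmp .rle (.int (.mul (.var (i + 2)) (.abs (.var (i + 1)))))
                         (.int (.abs (.var i))))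
        (.and (.cmp .rlt (.int (.abs (.var i)))
                         (.int (.mul (.add (.var (i + 2)) (.const 1)) (.abs (.var (i + 1))))))
          (.or (.and (.cmp .rge (.int (.mul (.var i) (.var (i + 1)))) (.int (.const 0)))
                     (.cmp .req V (.int (.var (i + 2)))))
               (.and (.cmp .rlt (.int (.mul (.var i) (.var (i + 1)))) (.int (.const 0)))
                     (.cmp .req V (.int (.sub (.const 0) (.var (i + 2)))))))))))))
  | .mod t u, V, i =>
      .exI i (.exI (i + 1) (.exI (i + 2)
        (.and (valF t (.int (.var i)) (i + 3))
        (.and (valF u (.int (.var (i + 1))) (i + 3))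
        (.and (.cmp .rle (.int (.mul (.var (i + 2)) (.abs (.var (i + 1)))))
                         (.int (.abs (.var i))))
        (.and (.cmp .rlt (.int (.abs (.var i)))
                         (.int (.mul (.add (.var (i + 2)) (.const 1)) (.abs (.var (i + 1))))))
          (.or (.and (.cmp .rge (.int (.mul (.var i) (.var (i + 1)))) (.int (.const 0)))
                     (.cmp .req V (.int (.sub (.var i) (.mul (.var (i + 2)) (.var (i + 1)))))))
               (.and (.cmp .rlt (.int (.mul (.var i) (.var (i + 1)))) (.int (.const 0)))
                     (.cmp .req V (.int (.add (.var i) (.mul (.var (i + 2)) (.var (i + 1))))))))))))))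
  | .intv t u, V, i =>
      .exI i (.exI (i + 1) (.exI (i + 2)
        (.and (valF t (.int (.var i)) (i + 3))
        (.and (valF u (.int (.var (i + 1))) (i + 3))
        (.and (.cmp .rle (.int (.var i)) (.int (.var (i + 2))))
        (.and (.cmp .rle (.int (.var (i + 2))) (.int (.var (i + 1))))
          (.cmp .req V (.int (.var (i + 2))))))))))

/-- `val_{t₁,…,tₙ}(V_g, …, V_{g+n-1})`. -/
def valsFml : List MGT → ℕ → S0F
  | [], _ => S0F.top
  | t :: ts, g => .and (valF t (.var g) 0) (valsFml ts (g + 1))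

def varsList (g k : ℕ) : List GTm := (List.range k).map fun i => .var (g + i)

/-- Existential quantification of the general variables `g, …, g+k-1`. -/
def exGs (g : ℕ) : ℕ → S0F → S0F
  | 0, F => F
  | k + 1, F => .exG g (exGs (g + 1) k F)

/-- Universal quantification of the general variables `0, …, n-1`. -/
def allGs : ℕ → S0F → S0F
  | 0, F => F
  | n + 1, F => .allG n (allGs n F)

/-- The translation τ^B of a literal or comparison, with fresh general variables
numbered from `g` on. -/
def tauBF : MBodyElem → ℕ → S0F
  | .lit (.pos a), g =>
      exGs g a.args.length
        (.and (valsFml a.args g) (.patom a.p (varsList g a.args.length)))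
  | .lit (.neg a), g =>
      exGs g a.args.length
        (.and (valsFml a.args g) (S0F.neg (.patom a.p (varsList g a.args.length))))
  | .lit (.nneg a), g =>
      exGs g a.args.length
        (.and (valsFml a.args g) (S0F.neg (S0F.neg (.patom a.p (varsList g a.args.length)))))
  | .cmp c, g =>
      .exG g (.exG (g + 1)
        (.and (valF c.l (.var g) 0)
        (.and (valF c.r (.var (g + 1)) 0)
          (.cmp c.rel (.var g) (.var (g + 1))))))

def tauBodyF (b : List MBodyElem) (g : ℕ) : S0F :=
  b.foldr (fun e F => .and (tauBF e g) F) S0F.top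

/-- The translation τ* of a mini-gringo rule. -/
def tauStar (R : MRule) : S0F :=
  match R.head with
  | .basic a =>
      allGs (R.vb + a.args.length)
        (.imp (.and (valsFml a.args R.vb) (tauBodyF R.body (R.vb + a.args.length)))
          (.patom a.p (varsList R.vb a.args.length)))
  | .choice a =>
      allGs (R.vb + a.args.length)
        (.imp (.and (valsFml a.args R.vb)
                (.and (tauBodyF R.body (R.vb + a.args.length))
                  (S0F.neg (S0F.neg (.patom a.p (varsList R.vb a.args.length))))))
          (.patom a.p (varsList R.vb a.args.length)))
  | .cons => allGs R.vb (.imp (tauBodyF R.body R.vb) .bot)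

/-- `τ*Prg`. -/
def tauStarProg (Prg : MProgram) : Set S0F := {F | ∃ R ∈ Prg, F = tauStar R}

/-! ## The grounding translation `F ↦ F^prop` -/

open scoped Classical in
noncomputable def S0F.toProp (v : String → PTerm) :
    (ξ : ℕ → PTerm) → (η : ℕ → ℤ) → S0F → IProp GAtom
  | ξ, η, .patom p ts => .atom (p, ts.map (GTm.eval v ξ η))
  | ξ, η, .cmp r a b => if r.holds (a.eval v ξ η) (b.eval v ξ η) then IProp.top else .bot
  | _, _, .bot => .bot
  | ξ, η, .and F G => .conj Bool fun bb => cond bb (F.toProp v ξ η) (G.toProp v ξ η)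
  | ξ, η, .or F G => .disj Bool fun bb => cond bb (F.toProp v ξ η) (G.toProp v ξ η)
  | ξ, η, .imp F G => .impl (F.toProp v ξ η) (G.toProp v ξ η)
  | ξ, η, .allG n F => .conj PTerm fun d => F.toProp v (Function.update ξ n d) η
  | ξ, η, .exG n F => .disj PTerm fun d => F.toProp v (Function.update ξ n d) η
  | ξ, η, .allI n F => .conj ℤ fun i => F.toProp v ξ (Function.update η n i)
  | ξ, η, .exI n F => .disj ℤ fun i => F.toProp v ξ (Function.update η n i)

/-! ## Programs with input and output -/

structure IOProgram : Type where
  rules : MProgram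
  PH : Finset String
  In : Finset (String × ℕ)
  Out : Finset (String × ℕ)

/-- The predicate symbol `pn` occurs in the rule `R`. -/
def occursRule (pn : String × ℕ) (R : MRule) : Prop :=
  (∃ a, (R.head = .basic a ∨ R.head = .choice a) ∧ a.pn = pn) ∨
  (∃ a, (MBodyElem.lit (.pos a) ∈ R.body ∨ MBodyElem.lit (.neg a) ∈ R.body ∨
         MBodyElem.lit (.nneg a) ∈ R.body) ∧ a.pn = pn)

/-- Well-formedness of an io-program: `In` and `Out` are disjoint and input symbols do
not occur in heads of rules. -/
def IOProgram.WF (Ω : IOProgram) : Prop :=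
  Disjoint Ω.In Ω.Out ∧
  ∀ R ∈ Ω.rules, ∀ a : MAtom, (R.head = .basic a ∨ R.head = .choice a) → a.pn ∉ Ω.In

def IOProgram.PublicSym (Ω : IOProgram) (pn : String × ℕ) : Prop := pn ∈ Ω.In ∨ pn ∈ Ω.Out
def IOProgram.PrivateSym (Ω : IOProgram) (pn : String × ℕ) : Prop :=
  pn ∉ Ω.In ∧ pn ∉ Ω.Out ∧ ∃ R ∈ Ω.rules, occursRule pn R
def IOProgram.PrivateAtom (Ω : IOProgram) (a : GAtom) : Prop :=
  Ω.PrivateSym (a.1, a.2.length)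
/-- Intensional symbols for the completion of an io-program: output and private
symbols (input symbols and comparisons are extensional). -/
def IOProgram.IntenSym (Ω : IOProgram) (pn : String × ℕ) : Prop :=
  pn ∈ Ω.Out ∨ Ω.PrivateSym pn

/-- `r` is not a placeholder. -/
def noPH (PH : Finset String) (r : PTerm) : Prop := ∀ c ∈ PH, r ≠ .sym c

/-- `v` is a valuation on `PH`: it maps placeholders to precomputed terms that are not
placeholders and is the identity elsewhere. -/
def StdForPH (PH : Finset String) (v : String → PTerm) : Prop :=
  (∀ c ∉ PH, v c = .sym c) ∧ ∀ c ∈ PH, noPH PH (v c)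

/-- `(v, I)` is an input for `Ω`. -/
def ValidInput (Ω : IOProgram) (v : String → PTerm) (I : Set GAtom) : Prop :=
  StdForPH Ω.PH v ∧
  ∀ a ∈ I, (a.1, a.2.length) ∈ Ω.In ∧ ∀ r ∈ a.2, noPH Ω.PH r

/-- The input atoms of a set of public atoms. -/
def IOProgram.inPart (Ω : IOProgram) (Pst : Set GAtom) : Set GAtom :=
  {a ∈ Pst | (a.1, a.2.length) ∈ Ω.In}

/-- `Pst` is an io-model of `Ω` for the input `(v, I)`: the set of public atoms of some
stable model of `v(Prg) ∪ I`. -/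
noncomputable def IOModel (Ω : IOProgram) (v : String → PTerm) (I : Set GAtom)
    (Pst : Set GAtom) : Prop :=
  ∃ J : Set GAtom,
    StablePropSet (tauProg (Ω.rules.map (MRule.appV v)) ∪ (fun a => IProp.atom a) '' I) J ∧
    Pst = {a ∈ J | Ω.PublicSym (a.1, a.2.length)}

/-! ## Satisfaction of the completion of an io-program -/

/-- Satisfaction of a ground literal, following τ^B. -/
def GLitSat (T : Set GAtom) : MLit → Prop
  | .pos a => ∃ rs ∈ valsList a.args, (a.p, rs) ∈ T
  | .neg a => ∃ rs ∈ valsList a.args, (a.p, rs) ∉ T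
  | .nneg a => ∃ rs ∈ valsList a.args, (a.p, rs) ∈ T

def GBodySat (T : Set GAtom) (b : List MBodyElem) : Prop :=
  ∀ e ∈ b, match e with
    | MBodyElem.lit l => GLitSat T l
    | MBodyElem.cmp c => ∃ r1 ∈ c.l.vals, ∃ r2 ∈ c.r.vals, c.rel.holds r1 r2

/-- The ground instance `(R.appV v).subst σ` supports the atom `(p, rs)` in `T`
(a disjunct of the completed definition of `p`). -/
def Supports (v : String → PTerm) (σ : ℕ → PTerm) (R : MRule) (T : Set GAtom)
    (p : String) (rs : List PTerm) : Prop :=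
  (∃ a : MAtom, ((R.appV v).subst σ).head = .basic a ∧ a.p = p ∧ rs ∈ valsList a.args ∧
     GBodySat T ((R.appV v).subst σ).body) ∨
  (∃ a : MAtom, ((R.appV v).subst σ).head = .choice a ∧ a.p = p ∧ rs ∈ valsList a.args ∧
     GBodySat T ((R.appV v).subst σ).body ∧ (p, rs) ∈ T)

/-- `T` satisfies the first-order completion of `v(Prg)` (intensional symbols: output and
private symbols of `Ω`). -/
def CompSat (Ω : IOProgram) (v : String → PTerm) (T : Set GAtom) : Prop :=
  (∀ p n, Ω.IntenSym (p, n) → ∀ rs : List PTerm, rs.length = n →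
     ((p, rs) ∈ T ↔ ∃ R ∈ Ω.rules, ∃ σ : ℕ → PTerm, Supports v σ R T p rs)) ∧
  (∀ R ∈ Ω.rules, R.head = .cons → ∀ σ : ℕ → PTerm,
     ¬ GBodySat T (((R.appV v).subst σ)).body)

/-- Satisfaction of the second-order completion `COMP[Ω]` (private symbols existentially
quantified) by the interpretation standard for `PH` determined by `v` and `T`. -/
def SatCompIO (Ω : IOProgram) (v : String → PTerm) (T : Set GAtom) : Prop :=
  ∃ Q : Set GAtom, (∀ a ∈ Q, Ω.PrivateAtom a) ∧
    CompSat Ω v ({a ∈ T | ¬ Ω.PrivateAtom a} ∪ Q)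

/-! ## Positive dependency graphs and tightness -/

/-- A vertex of the positive dependency graph of `Ω` for an input: a ground atom of an
output or private symbol whose arguments are not placeholders. -/
def IOProgram.IsVertex (Ω : IOProgram) (A : GAtom) : Prop :=
  ((A.1, A.2.length) ∈ Ω.Out ∨ Ω.PrivateSym (A.1, A.2.length)) ∧
  ∀ r ∈ A.2, noPH Ω.PH r

/-- Edge relation of the positive dependency graph of `Ω` for the input `(v, I)`. -/
def IODepEdge (Ω : IOProgram) (v : String → PTerm) (I : Set GAtom)
    (A B : GAtom) : Prop :=
  Ω.IsVertex A ∧ Ω.IsVertex B ∧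
  ∃ R ∈ Ω.rules, ∃ σ : ℕ → PTerm,
    (∃ a : MAtom, (((R.appV v).subst σ).head = .basic a ∨
        ((R.appV v).subst σ).head = .choice a) ∧
      a.p = A.1 ∧ A.2 ∈ valsList a.args) ∧
    (∃ a : MAtom, MBodyElem.lit (.pos a) ∈ ((R.appV v).subst σ).body ∧
      a.p = B.1 ∧ B.2 ∈ valsList a.args) ∧
    (∀ a : MAtom, (MBodyElem.lit (.pos a) ∈ ((R.appV v).subst σ).body ∨
        MBodyElem.lit (.nneg a) ∈ ((R.appV v).subst σ).body) →
      (a.p, a.args.length) ∈ Ω.In → ∃ rs ∈ valsList a.args, (a.p, rs) ∈ I) ∧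
    (∀ a : MAtom, MBodyElem.lit (.neg a) ∈ ((R.appV v).subst σ).body →
      (a.p, a.args.length) ∈ Ω.In → ∃ rs ∈ valsList a.args, (a.p, rs) ∉ I) ∧
    (∀ c : MComp, MBodyElem.cmp c ∈ ((R.appV v).subst σ).body →
      ∃ r1 ∈ c.l.vals, ∃ r2 ∈ c.r.vals, c.rel.holds r1 r2)

/-- `Ω` is locally tight on the input `(v, I)`: its positive dependency graph for this
input has no infinite walks. -/
def LocallyTight (Ω : IOProgram) (v : String → PTerm) (I : Set GAtom) : Prop :=
  ¬ ∃ w : ℕ → GAtom, ∀ n, IODepEdge Ω v I (w n) (w (n + 1))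

/-- Edge relation of the positive predicate dependency graph of `Prg`. -/
def PredEdge (Prg : MProgram) (pn pn' : String × ℕ) : Prop :=
  ∃ R ∈ Prg, (∃ a, (R.head = .basic a ∨ R.head = .choice a) ∧ a.pn = pn) ∧
    (∃ a, MBodyElem.lit (.pos a) ∈ R.body ∧ a.pn = pn')

/-- `Prg` is tight: its positive predicate dependency graph is acyclic. -/
def Tight (Prg : MProgram) : Prop := ∀ pn, ¬ Relation.TransGen (PredEdge Prg) pn pn


/-! ## Auxiliary lemmas -/

section Aux

open scoped Classical

lemma le_foldr_max {l : List ℕ} {x : ℕ} (h : x ∈ l) : x ≤ l.foldr max 0 := by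
  induction l with
  | nil => cases h
  | cons a l ih =>
    rcases List.mem_cons.mp h with rfl | h
    · exact le_max_left _ _
    · exact le_trans (ih h) (le_max_right _ _)

lemma MGT.subst_congr {σ σ' : ℕ → PTerm} :
    ∀ (t : MGT), (∀ k, k < t.vb → σ k = σ' k) → t.subst σ = t.subst σ'
  | .pre _, _ => rfl
  | .var n, h => by simp [MGT.subst, h n (Nat.lt_succ_self n)]
  | .abs t, h => by simp only [MGT.subst, MGT.subst_congr t h]
  | .add t u, h => by
    simp only [MGT.subst,
      MGT.subst_congr t (fun k hk => h k (lt_of_lt_of_le hk (le_max_left _ _))),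
      MGT.subst_congr u (fun k hk => h k (lt_of_lt_of_le hk (le_max_right _ _)))]
  | .sub t u, h => by
    simp only [MGT.subst,
      MGT.subst_congr t (fun k hk => h k (lt_of_lt_of_le hk (le_max_left _ _))),
      MGT.subst_congr u (fun k hk => h k (lt_of_lt_of_le hk (le_max_right _ _)))]
  | .mul t u, h => by
    simp only [MGT.subst,
      MGT.subst_congr t (fun k hk => h k (lt_of_lt_of_le hk (le_max_left _ _))),
      MGT.subst_congr u (fun k hk => h k (lt_of_lt_of_le hk (le_max_right _ _)))]
  | .div t u, h => by
    simp only [MGT.subst,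
      MGT.subst_congr t (fun k hk => h k (lt_of_lt_of_le hk (le_max_left _ _))),
      MGT.subst_congr u (fun k hk => h k (lt_of_lt_of_le hk (le_max_right _ _)))]
  | .mod t u, h => by
    simp only [MGT.subst,
      MGT.subst_congr t (fun k hk => h k (lt_of_lt_of_le hk (le_max_left _ _))),
      MGT.subst_congr u (fun k hk => h k (lt_of_lt_of_le hk (le_max_right _ _)))]
  | .intv t u, h => by
    simp only [MGT.subst,
      MGT.subst_congr t (fun k hk => h k (lt_of_lt_of_le hk (le_max_left _ _))),
      MGT.subst_congr u (fun k hk => h k (lt_of_lt_of_le hk (le_max_right _ _)))]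

lemma argsmap_congr (args : List MGT) (g : ℕ) (h : ∀ t ∈ args, t.vb ≤ g)
    (ξ ξ' : ℕ → PTerm) (hag : ∀ j, j < g → ξ' j = ξ j) :
    args.map (MGT.subst ξ') = args.map (MGT.subst ξ) :=
  List.map_congr_left fun t ht =>
    MGT.subst_congr t (fun k hk => hag k (lt_of_lt_of_le hk (h t ht)))

lemma eval_pre (v : String → PTerm) (ξ : ℕ → PTerm) (η : ℕ → ℤ) (p : PTerm) :
    (GTm.pre p).eval symv ξ η = p := by
  cases p <;> rfl

/-! ### htSat helpers -/

lemma htSat_top {A : Type} (Hs Ts : Set A) : (IProp.top (A := A)).htSat Hs Ts :=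
  fun i => i.elim

lemma toProp_and (v : String → PTerm) (ξ : ℕ → PTerm) (η : ℕ → ℤ) (F G : S0F)
    (Hs Ts : Set GAtom) :
    ((S0F.and F G).toProp v ξ η).htSat Hs Ts ↔
      ((F.toProp v ξ η).htSat Hs Ts ∧ (G.toProp v ξ η).htSat Hs Ts) := by
  constructor
  · intro h; exact ⟨h true, h false⟩
  · rintro ⟨h1, h2⟩ b; cases b
    · exact h2
    · exact h1

lemma toProp_or (v : String → PTerm) (ξ : ℕ → PTerm) (η : ℕ → ℤ) (F G : S0F)
    (Hs Ts : Set GAtom) :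
    ((S0F.or F G).toProp v ξ η).htSat Hs Ts ↔
      ((F.toProp v ξ η).htSat Hs Ts ∨ (G.toProp v ξ η).htSat Hs Ts) := by
  constructor
  · rintro ⟨b, hb⟩; cases b
    · exact Or.inr hb
    · exact Or.inl hb
  · rintro (h | h)
    · exact ⟨true, h⟩
    · exact ⟨false, h⟩

lemma toProp_cmp (v : String → PTerm) (ξ : ℕ → PTerm) (η : ℕ → ℤ) (r : CRel)
    (a b : GTm) (Hs Ts : Set GAtom) :
    ((S0F.cmp r a b).toProp v ξ η).htSat Hs Ts ↔ r.holds (a.eval v ξ η) (b.eval v ξ η) := by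
  simp only [S0F.toProp]
  split_ifs with h
  · exact iff_of_true (htSat_top _ _) h
  · exact iff_of_false (fun hh => hh) h


lemma toProp_exI (v : String → PTerm) (ξ : ℕ → PTerm) (η : ℕ → ℤ) (n : ℕ) (F : S0F)
    (Hs Ts : Set GAtom) :
    ((S0F.exI n F).toProp v ξ η).htSat Hs Ts ↔
      ∃ x : ℤ, ((F.toProp v ξ (Function.update η n x)).htSat Hs Ts) := Iff.rfl

lemma toProp_exG (v : String → PTerm) (ξ : ℕ → PTerm) (η : ℕ → ℤ) (n : ℕ) (F : S0F)
    (Hs Ts : Set GAtom) :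
    ((S0F.exG n F).toProp v ξ η).htSat Hs Ts ↔
      ∃ d : PTerm, ((F.toProp v (Function.update ξ n d) η).htSat Hs Ts) := Iff.rfl

lemma toProp_allG (v : String → PTerm) (ξ : ℕ → PTerm) (η : ℕ → ℤ) (n : ℕ) (F : S0F)
    (Hs Ts : Set GAtom) :
    ((S0F.allG n F).toProp v ξ η).htSat Hs Ts ↔
      ∀ d : PTerm, ((F.toProp v (Function.update ξ n d) η).htSat Hs Ts) := Iff.rfl

lemma toProp_imp (v : String → PTerm) (ξ : ℕ → PTerm) (η : ℕ → ℤ) (F G : S0F)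
    (Hs Ts : Set GAtom) :
    ((S0F.imp F G).toProp v ξ η).htSat Hs Ts ↔
      (((F.toProp v ξ η).htSat Hs Ts → (G.toProp v ξ η).htSat Hs Ts) ∧
       ((F.toProp v ξ η).htSat Ts Ts → (G.toProp v ξ η).htSat Ts Ts)) := Iff.rfl

lemma toProp_patom (v : String → PTerm) (ξ : ℕ → PTerm) (η : ℕ → ℤ) (p : String)
    (ts : List GTm) (Hs Ts : Set GAtom) :
    ((S0F.patom p ts).toProp v ξ η).htSat Hs Ts ↔ (p, ts.map (GTm.eval v ξ η)) ∈ Hs := Iff.rfl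

/-! ### arithmetic for tdiv -/

lemma j_bridge (x y j : ℤ) (h1 : j * |y| ≤ |x|) (h2 : |x| < (j + 1) * |y|) :
    y ≠ 0 ∧ j = |x| / |y| := by
  have hy : y ≠ 0 := by
    intro h
    rw [h] at h2
    simp at h2
    have := abs_nonneg x
    omega
  have hy' : 0 < |y| := abs_pos.mpr hy
  refine ⟨hy, ?_⟩
  have a1 : j ≤ |x| / |y| := (Int.le_ediv_iff_mul_le hy').mpr h1
  have a2 : |x| / |y| < j + 1 := (Int.ediv_lt_iff_lt_mul hy').mpr h2
  omega

lemma j_exists (x y : ℤ) (hy : y ≠ 0) :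
    (|x| / |y|) * |y| ≤ |x| ∧ |x| < ((|x| / |y|) + 1) * |y| := by
  have hy' : 0 < |y| := abs_pos.mpr hy
  exact ⟨(Int.le_ediv_iff_mul_le hy').mp le_rfl,
    (Int.ediv_lt_iff_lt_mul hy').mp (lt_add_one _)⟩

lemma tdiv_core (x y : ℤ) (hy : y ≠ 0) :
    Int.tdiv x y = if 0 ≤ x * y then |x| / |y| else -(|x| / |y|) := by
  rcases le_or_gt 0 x with hx | hx <;> rcases le_or_gt 0 y with hy' | hy'
  · rw [if_pos (mul_nonneg hx hy'), abs_of_nonneg hx, abs_of_nonneg hy',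
      Int.tdiv_eq_ediv_of_nonneg hx]
  · rcases hx.eq_or_lt with h | hx0
    · rw [← h]; simp [Int.zero_tdiv]
    · have hlt : x * y < 0 := mul_neg_of_pos_of_neg hx0 hy'
      rw [if_neg (not_le.mpr hlt)]
      have h1 : Int.tdiv x y = -(Int.tdiv x (-y)) := by
        conv_lhs => rw [← neg_neg y]
        rw [Int.tdiv_neg]
      rw [h1, Int.tdiv_eq_ediv_of_nonneg hx, abs_of_nonneg hx, abs_of_neg hy']
  · have hy0 : 0 < y := lt_of_le_of_ne hy' (Ne.symm hy)
    have hlt : x * y < 0 := mul_neg_of_neg_of_pos hx hy0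
    rw [if_neg (not_le.mpr hlt)]
    have h1 : Int.tdiv x y = -(Int.tdiv (-x) y) := by
      conv_lhs => rw [← neg_neg x]
      rw [Int.neg_tdiv]
    rw [h1, Int.tdiv_eq_ediv_of_nonneg (a := -x) (by omega), abs_of_neg hx, abs_of_nonneg hy']
  · rw [if_pos (le_of_lt (mul_pos_of_neg_of_neg hx hy'))]
    have h1 : Int.tdiv x y = Int.tdiv (-x) (-y) := by
      conv_rhs => rw [Int.neg_tdiv, Int.tdiv_neg, neg_neg]
    rw [h1, Int.tdiv_eq_ediv_of_nonneg (a := -x) (by omega), abs_of_neg hx, abs_of_neg hy']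

lemma tdiv_bridge (x y : ℤ) (P : ℤ → Prop) :
    (∃ j : ℤ, j * |y| ≤ |x| ∧ |x| < (j + 1) * |y| ∧
      ((0 ≤ x * y ∧ P j) ∨ (x * y < 0 ∧ P (0 - j)))) ↔
    (y ≠ 0 ∧ P (tdiv x y)) := by
  constructor
  · rintro ⟨j, h1, h2, h3⟩
    obtain ⟨hy, hj⟩ := j_bridge x y j h1 h2
    refine ⟨hy, ?_⟩
    rcases h3 with ⟨hs, hP⟩ | ⟨hs, hP⟩
    · rwa [tdiv, tdiv_core x y hy, if_pos hs, ← hj]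
    · rw [tdiv, tdiv_core x y hy, if_neg (not_le.mpr hs), ← hj]
      have : -j = 0 - j := by ring
      rwa [this]
  · rintro ⟨hy, hP⟩
    refine ⟨|x| / |y|, (j_exists x y hy).1, (j_exists x y hy).2, ?_⟩
    by_cases hs : 0 ≤ x * y
    · left; refine ⟨hs, ?_⟩; rwa [tdiv, tdiv_core x y hy, if_pos hs] at hP
    · right; refine ⟨not_le.mp hs, ?_⟩
      rw [tdiv, tdiv_core x y hy, if_neg hs] at hP
      have : -(|x| / |y|) = 0 - |x| / |y| := by ring
      rwa [this] at hP

lemma tmod_bridge (x y : ℤ) (P : ℤ → Prop) :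
    (∃ j : ℤ, j * |y| ≤ |x| ∧ |x| < (j + 1) * |y| ∧
      ((0 ≤ x * y ∧ P (x - j * y)) ∨ (x * y < 0 ∧ P (x + j * y)))) ↔
    (y ≠ 0 ∧ P (x - y * tdiv x y)) := by
  constructor
  · rintro ⟨j, h1, h2, h3⟩
    obtain ⟨hy, hj⟩ := j_bridge x y j h1 h2
    refine ⟨hy, ?_⟩
    rcases h3 with ⟨hs, hP⟩ | ⟨hs, hP⟩
    · rw [tdiv, tdiv_core x y hy, if_pos hs, ← hj]
      have : x - y * j = x - j * y := by ring
      rwa [this]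
    · rw [tdiv, tdiv_core x y hy, if_neg (not_le.mpr hs), ← hj]
      have : x - y * -j = x + j * y := by ring
      rwa [this]
  · rintro ⟨hy, hP⟩
    refine ⟨|x| / |y|, (j_exists x y hy).1, (j_exists x y hy).2, ?_⟩
    by_cases hs : 0 ≤ x * y
    · left; refine ⟨hs, ?_⟩
      rw [tdiv, tdiv_core x y hy, if_pos hs] at hP
      have : x - y * (|x| / |y|) = x - |x| / |y| * y := by ring
      rwa [this] at hP
    · right; refine ⟨not_le.mp hs, ?_⟩
      rw [tdiv, tdiv_core x y hy, if_neg hs] at hP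
      have : x - y * -(|x| / |y|) = x + |x| / |y| * y := by ring
      rwa [this] at hP


/-! ### correctness of `valF` -/

lemma valF_char (ξ : ℕ → PTerm) (Hs Ts : Set GAtom) :
    ∀ (t : MGT) (V : GTm) (i : ℕ) (η : ℕ → ℤ),
      (∀ η' : ℕ → ℤ, (∀ j, j < i → η' j = η j) → V.eval symv ξ η' = V.eval symv ξ η) →
      (((valF t V i).toProp symv ξ η).htSat Hs Ts ↔ V.eval symv ξ η ∈ (t.subst ξ).vals) := by
  intro t
  induction t with
  | pre p =>
    intro V i η hV
    simp only [valF]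
    rw [toProp_cmp]
    cases p <;> simp [CRel.holds, GTm.eval, symv, MGT.subst, MGT.vals]
  | var n =>
    intro V i η hV
    simp only [valF]
    rw [toProp_cmp]
    simp [CRel.holds, MGT.subst, MGT.vals, GTm.eval]
  | abs t ih =>
    intro V i η hV
    simp only [valF, toProp_exI, MGT.subst, MGT.vals, Set.mem_setOf_eq]
    refine exists_congr fun x => ?_
    rw [toProp_and,
      ih (GTm.int (ITm.var i)) (i + 1) (Function.update η i x)
        (fun η' h => by simp [GTm.eval, ITm.eval, h i (by omega)]),
      toProp_cmp]
    have hVx : V.eval symv ξ (Function.update η i x) = V.eval symv ξ η :=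
      hV _ (fun j hj => Function.update_of_ne (by omega) _ _)
    rw [hVx]
    simp [GTm.eval, ITm.eval, CRel.holds]
  | add t u iht ihu =>
    intro V i η hV
    simp only [valF, toProp_exI, MGT.subst, MGT.vals, Set.mem_setOf_eq]
    refine exists_congr fun x => exists_congr fun y => ?_
    rw [toProp_and, toProp_and,
      iht (GTm.int (ITm.var i)) (i + 2)
        (Function.update (Function.update η i x) (i+1) y)
        (fun η' h => by simp [GTm.eval, ITm.eval, h i (by omega)]),
      ihu (GTm.int (ITm.var (i+1))) (i + 2)
        (Function.update (Function.update η i x) (i+1) y)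
        (fun η' h => by simp [GTm.eval, ITm.eval, h (i+1) (by omega)]),
      toProp_cmp]
    have e1 : Function.update (Function.update η i x) (i+1) y i = x := by
      rw [Function.update_of_ne (by omega), Function.update_self]
    have e2 : Function.update (Function.update η i x) (i+1) y (i+1) = y :=
      Function.update_self _ _ _
    have hVx : V.eval symv ξ (Function.update (Function.update η i x) (i+1) y) =
        V.eval symv ξ η :=
      hV _ (fun j hj => by
        rw [Function.update_of_ne (by omega), Function.update_of_ne (by omega)])
    rw [hVx]
    simp [GTm.eval, ITm.eval, CRel.holds, e1, e2]
  | sub t u iht ihu =>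
    intro V i η hV
    simp only [valF, toProp_exI, MGT.subst, MGT.vals, Set.mem_setOf_eq]
    refine exists_congr fun x => exists_congr fun y => ?_
    rw [toProp_and, toProp_and,
      iht (GTm.int (ITm.var i)) (i + 2)
        (Function.update (Function.update η i x) (i+1) y)
        (fun η' h => by simp [GTm.eval, ITm.eval, h i (by omega)]),
      ihu (GTm.int (ITm.var (i+1))) (i + 2)
        (Function.update (Function.update η i x) (i+1) y)
        (fun η' h => by simp [GTm.eval, ITm.eval, h (i+1) (by omega)]),
      toProp_cmp]
    have e1 : Function.update (Function.update η i x) (i+1) y i = x := by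
      rw [Function.update_of_ne (by omega), Function.update_self]
    have e2 : Function.update (Function.update η i x) (i+1) y (i+1) = y :=
      Function.update_self _ _ _
    have hVx : V.eval symv ξ (Function.update (Function.update η i x) (i+1) y) =
        V.eval symv ξ η :=
      hV _ (fun j hj => by
        rw [Function.update_of_ne (by omega), Function.update_of_ne (by omega)])
    rw [hVx]
    simp [GTm.eval, ITm.eval, CRel.holds, e1, e2]
  | mul t u iht ihu =>
    intro V i η hV
    simp only [valF, toProp_exI, MGT.subst, MGT.vals, Set.mem_setOf_eq]
    refine exists_congr fun x => exists_congr fun y => ?_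
    rw [toProp_and, toProp_and,
      iht (GTm.int (ITm.var i)) (i + 2)
        (Function.update (Function.update η i x) (i+1) y)
        (fun η' h => by simp [GTm.eval, ITm.eval, h i (by omega)]),
      ihu (GTm.int (ITm.var (i+1))) (i + 2)
        (Function.update (Function.update η i x) (i+1) y)
        (fun η' h => by simp [GTm.eval, ITm.eval, h (i+1) (by omega)]),
      toProp_cmp]
    have e1 : Function.update (Function.update η i x) (i+1) y i = x := by
      rw [Function.update_of_ne (by omega), Function.update_self]
    have e2 : Function.update (Function.update η i x) (i+1) y (i+1) = y :=
      Function.update_self _ _ _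
    have hVx : V.eval symv ξ (Function.update (Function.update η i x) (i+1) y) =
        V.eval symv ξ η :=
      hV _ (fun j hj => by
        rw [Function.update_of_ne (by omega), Function.update_of_ne (by omega)])
    rw [hVx]
    simp [GTm.eval, ITm.eval, CRel.holds, e1, e2]
  | div t u iht ihu =>
    intro V i η hV
    have key : (((valF (.div t u) V i).toProp symv ξ η).htSat Hs Ts) ↔
        ∃ x y z : ℤ, PTerm.num x ∈ (t.subst ξ).vals ∧ PTerm.num y ∈ (u.subst ξ).vals ∧
          z * |y| ≤ |x| ∧ |x| < (z + 1) * |y| ∧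
          ((0 ≤ x * y ∧ V.eval symv ξ η = PTerm.num z) ∨
           (x * y < 0 ∧ V.eval symv ξ η = PTerm.num (0 - z))) := by
      simp only [valF, toProp_exI]
      refine exists_congr fun x => exists_congr fun y => exists_congr fun z => ?_
      simp only [toProp_and, toProp_or, toProp_cmp]
      rw [iht (GTm.int (ITm.var i)) (i + 3)
            (Function.update (Function.update (Function.update η i x) (i+1) y) (i+2) z)
            (fun η' h => by simp [GTm.eval, ITm.eval, h i (by omega)]),
          ihu (GTm.int (ITm.var (i+1))) (i + 3)
            (Function.update (Function.update (Function.update η i x) (i+1) y) (i+2) z)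
            (fun η' h => by simp [GTm.eval, ITm.eval, h (i+1) (by omega)])]
      have e1 : Function.update (Function.update (Function.update η i x) (i+1) y) (i+2) z i = x := by
        rw [Function.update_of_ne (by omega), Function.update_of_ne (by omega),
          Function.update_self]
      have e2 : Function.update (Function.update (Function.update η i x) (i+1) y) (i+2) z (i+1) = y := by
        rw [Function.update_of_ne (by omega), Function.update_self]
      have e3 : Function.update (Function.update (Function.update η i x) (i+1) y) (i+2) z (i+2) = z :=
        Function.update_self _ _ _
      have hVx : V.eval symv ξ
          (Function.update (Function.update (Function.update η i x) (i+1) y) (i+2) z) =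
          V.eval symv ξ η :=
        hV _ (fun j hj => by
          rw [Function.update_of_ne (by omega), Function.update_of_ne (by omega),
            Function.update_of_ne (by omega)])
      rw [hVx]
      simp only [GTm.eval, ITm.eval, CRel.holds, PTerm.le, e1, e2, e3, ne_eq,
        PTerm.num.injEq]
      constructor
      · rintro ⟨hA, hB, hC, hD, hE⟩
        refine ⟨hA, hB, hC, lt_of_le_of_ne hD.1 hD.2, ?_⟩
        rcases hE with ⟨h1, h2⟩ | ⟨h1, h2⟩
        · exact Or.inl ⟨h1, h2⟩
        · exact Or.inr ⟨lt_of_le_of_ne h1.1 h1.2, h2⟩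
      · rintro ⟨hA, hB, hC, hD, hE⟩
        refine ⟨hA, hB, hC, ⟨le_of_lt hD, ne_of_lt hD⟩, ?_⟩
        rcases hE with ⟨h1, h2⟩ | ⟨h1, h2⟩
        · exact Or.inl ⟨h1, h2⟩
        · exact Or.inr ⟨⟨le_of_lt h1, ne_of_lt h1⟩, h2⟩
    rw [key]
    simp only [MGT.subst, MGT.vals, Set.mem_setOf_eq]
    constructor
    · rintro ⟨x, y, z, hA, hB, hC, hD, hE⟩
      obtain ⟨hy, hP⟩ := (tdiv_bridge x y (fun w => V.eval symv ξ η = PTerm.num w)).mp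
        ⟨z, hC, hD, hE⟩
      exact ⟨x, y, hA, hB, hy, hP⟩
    · rintro ⟨m, n, hA, hB, hn, hP⟩
      obtain ⟨j, h1, h2, h3⟩ := (tdiv_bridge m n (fun w => V.eval symv ξ η = PTerm.num w)).mpr
        ⟨hn, hP⟩
      exact ⟨m, n, j, hA, hB, h1, h2, h3⟩
  | mod t u iht ihu =>
    intro V i η hV
    have key : (((valF (.mod t u) V i).toProp symv ξ η).htSat Hs Ts) ↔
        ∃ x y z : ℤ, PTerm.num x ∈ (t.subst ξ).vals ∧ PTerm.num y ∈ (u.subst ξ).vals ∧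
          z * |y| ≤ |x| ∧ |x| < (z + 1) * |y| ∧
          ((0 ≤ x * y ∧ V.eval symv ξ η = PTerm.num (x - z * y)) ∨
           (x * y < 0 ∧ V.eval symv ξ η = PTerm.num (x + z * y))) := by
      simp only [valF, toProp_exI]
      refine exists_congr fun x => exists_congr fun y => exists_congr fun z => ?_
      simp only [toProp_and, toProp_or, toProp_cmp]
      rw [iht (GTm.int (ITm.var i)) (i + 3)
            (Function.update (Function.update (Function.update η i x) (i+1) y) (i+2) z)
            (fun η' h => by simp [GTm.eval, ITm.eval, h i (by omega)]),
          ihu (GTm.int (ITm.var (i+1))) (i + 3)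
            (Function.update (Function.update (Function.update η i x) (i+1) y) (i+2) z)
            (fun η' h => by simp [GTm.eval, ITm.eval, h (i+1) (by omega)])]
      have e1 : Function.update (Function.update (Function.update η i x) (i+1) y) (i+2) z i = x := by
        rw [Function.update_of_ne (by omega), Function.update_of_ne (by omega),
          Function.update_self]
      have e2 : Function.update (Function.update (Function.update η i x) (i+1) y) (i+2) z (i+1) = y := by
        rw [Function.update_of_ne (by omega), Function.update_self]
      have e3 : Function.update (Function.update (Function.update η i x) (i+1) y) (i+2) z (i+2) = z :=
        Function.update_self _ _ _
      have hVx : V.eval symv ξ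
          (Function.update (Function.update (Function.update η i x) (i+1) y) (i+2) z) =
          V.eval symv ξ η :=
        hV _ (fun j hj => by
          rw [Function.update_of_ne (by omega), Function.update_of_ne (by omega),
            Function.update_of_ne (by omega)])
      rw [hVx]
      simp only [GTm.eval, ITm.eval, CRel.holds, PTerm.le, e1, e2, e3, ne_eq,
        PTerm.num.injEq]
      constructor
      · rintro ⟨hA, hB, hC, hD, hE⟩
        refine ⟨hA, hB, hC, lt_of_le_of_ne hD.1 hD.2, ?_⟩
        rcases hE with ⟨h1, h2⟩ | ⟨h1, h2⟩
        · exact Or.inl ⟨h1, h2⟩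
        · exact Or.inr ⟨lt_of_le_of_ne h1.1 h1.2, h2⟩
      · rintro ⟨hA, hB, hC, hD, hE⟩
        refine ⟨hA, hB, hC, ⟨le_of_lt hD, ne_of_lt hD⟩, ?_⟩
        rcases hE with ⟨h1, h2⟩ | ⟨h1, h2⟩
        · exact Or.inl ⟨h1, h2⟩
        · exact Or.inr ⟨⟨le_of_lt h1, ne_of_lt h1⟩, h2⟩
    rw [key]
    simp only [MGT.subst, MGT.vals, Set.mem_setOf_eq]
    constructor
    · rintro ⟨x, y, z, hA, hB, hC, hD, hE⟩
      obtain ⟨hy, hP⟩ := (tmod_bridge x y (fun w => V.eval symv ξ η = PTerm.num w)).mp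
        ⟨z, hC, hD, hE⟩
      exact ⟨x, y, hA, hB, hy, hP⟩
    · rintro ⟨m, n, hA, hB, hn, hP⟩
      obtain ⟨j, h1, h2, h3⟩ := (tmod_bridge m n (fun w => V.eval symv ξ η = PTerm.num w)).mpr
        ⟨hn, hP⟩
      exact ⟨m, n, j, hA, hB, h1, h2, h3⟩
  | intv t u iht ihu =>
    intro V i η hV
    simp only [valF, toProp_exI, MGT.subst, MGT.vals, Set.mem_setOf_eq]
    refine exists_congr fun x => exists_congr fun y => exists_congr fun z => ?_
    simp only [toProp_and, toProp_cmp]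
    rw [iht (GTm.int (ITm.var i)) (i + 3)
          (Function.update (Function.update (Function.update η i x) (i+1) y) (i+2) z)
          (fun η' h => by simp [GTm.eval, ITm.eval, h i (by omega)]),
        ihu (GTm.int (ITm.var (i+1))) (i + 3)
          (Function.update (Function.update (Function.update η i x) (i+1) y) (i+2) z)
          (fun η' h => by simp [GTm.eval, ITm.eval, h (i+1) (by omega)])]
    have e1 : Function.update (Function.update (Function.update η i x) (i+1) y) (i+2) z i = x := by
      rw [Function.update_of_ne (by omega), Function.update_of_ne (by omega),
        Function.update_self]
    have e2 : Function.update (Function.update (Function.update η i x) (i+1) y) (i+2) z (i+1) = y := by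
      rw [Function.update_of_ne (by omega), Function.update_self]
    have e3 : Function.update (Function.update (Function.update η i x) (i+1) y) (i+2) z (i+2) = z :=
      Function.update_self _ _ _
    have hVx : V.eval symv ξ
        (Function.update (Function.update (Function.update η i x) (i+1) y) (i+2) z) =
        V.eval symv ξ η :=
      hV _ (fun j hj => by
        rw [Function.update_of_ne (by omega), Function.update_of_ne (by omega),
          Function.update_of_ne (by omega)])
    rw [hVx]
    simp [GTm.eval, ITm.eval, CRel.holds, PTerm.le, e1, e2, e3]


/-! ### lists of values -/

lemma mem_valsList_cons {r : PTerm} {rs : List PTerm} {t : MGT} {ts : List MGT} :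
    (r :: rs) ∈ valsList (t :: ts) ↔ r ∈ t.vals ∧ rs ∈ valsList ts := by
  constructor
  · rintro ⟨r', rs', h1, h2, h3⟩
    obtain ⟨rfl, rfl⟩ : r = r' ∧ rs = rs' := by
      constructor <;> [exact (List.cons.injEq _ _ _ _ ▸ h3).1; exact (List.cons.injEq _ _ _ _ ▸ h3).2]
    exact ⟨h1, h2⟩
  · rintro ⟨h1, h2⟩
    exact ⟨r, rs, h1, h2, rfl⟩

lemma valsList_length : ∀ {ts : List MGT} {rs : List PTerm}, rs ∈ valsList ts →
    rs.length = ts.length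
  | [], rs, h => by
    have : rs = [] := h
    simp [this]
  | t :: ts, rs, h => by
    obtain ⟨r, rs', _, h2, rfl⟩ := h
    simp [valsList_length h2]

lemma varsList_eval (v : String → PTerm) (ξ : ℕ → PTerm) (η : ℕ → ℤ) (g n : ℕ) :
    (varsList g n).map (GTm.eval v ξ η) = (List.range n).map fun k => ξ (g + k) := by
  rw [varsList, List.map_map]
  rfl

lemma map_range_update (rs : List PTerm) (g : ℕ) (ξ : ℕ → PTerm) :
    ∃ ξ' : ℕ → PTerm, (∀ j, (j < g ∨ g + rs.length ≤ j) → ξ' j = ξ j) ∧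
      (List.range rs.length).map (fun k => ξ' (g + k)) = rs := by
  refine ⟨fun j => if h : g ≤ j ∧ j < g + rs.length then rs.getD (j - g) (PTerm.num 0)
    else ξ j, ?_, ?_⟩
  · intro j hj
    dsimp only
    rw [dif_neg (by omega)]
  · apply List.ext_getElem
    · simp
    · intro k h1 h2
      simp only [List.getElem_map, List.getElem_range]
      rw [dif_pos (by simp at h1; omega)]
      have hgk : g + k - g = k := by omega
      rw [hgk, List.getD_eq_getElem]

/-! ### `valsFml`, `exGs`, `allGs` -/

lemma valsFml_char (ξ : ℕ → PTerm) (Hs Ts : Set GAtom) :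
    ∀ (ts : List MGT) (g : ℕ) (η : ℕ → ℤ),
      ((valsFml ts g).toProp symv ξ η).htSat Hs Ts ↔
        ((List.range ts.length).map fun k => ξ (g + k)) ∈ valsList (ts.map (MGT.subst ξ))
  | [], g, η => by
    constructor
    · intro _
      simp only [List.length_nil, List.range_zero, List.map_nil]
      exact rfl
    · intro _
      exact ⟨id, id⟩
  | t :: ts, g, η => by
    rw [show valsFml (t :: ts) g = .and (valF t (.var g) 0) (valsFml ts (g + 1)) from rfl,
      toProp_and, valF_char ξ Hs Ts t (.var g) 0 η (fun η' _ => rfl),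
      valsFml_char ξ Hs Ts ts (g + 1) η]
    have hr : (List.range (t :: ts).length).map (fun k => ξ (g + k)) =
        ξ g :: (List.range ts.length).map fun k => ξ (g + 1 + k) := by
      rw [List.length_cons, List.range_succ_eq_map, List.map_cons, List.map_map]
      simp only [Nat.add_zero]
      congr 1
      apply List.map_congr_left
      intro k _
      simp only [Function.comp_apply]
      congr 1
      omega
    rw [hr, List.map_cons, mem_valsList_cons]
    exact and_congr (by rfl) Iff.rfl

lemma exGs_char (Hs Ts : Set GAtom) (η : ℕ → ℤ) :
    ∀ (k g : ℕ) (F : S0F) (ξ : ℕ → PTerm),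
      ((exGs g k F).toProp symv ξ η).htSat Hs Ts ↔
        ∃ ξ' : ℕ → PTerm, (∀ j, (j < g ∨ g + k ≤ j) → ξ' j = ξ j) ∧
          (F.toProp symv ξ' η).htSat Hs Ts
  | 0, g, F, ξ => by
    constructor
    · intro h
      exact ⟨ξ, fun _ _ => rfl, h⟩
    · rintro ⟨ξ', hag, h⟩
      have : ξ' = ξ := funext fun j => hag j (by omega)
      rwa [this] at h
  | k + 1, g, F, ξ => by
    rw [show exGs g (k + 1) F = .exG g (exGs (g + 1) k F) from rfl, toProp_exG]
    constructor
    · rintro ⟨d, hd⟩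
      obtain ⟨ξ', hag, h⟩ := (exGs_char Hs Ts η k (g + 1) F (Function.update ξ g d)).mp hd
      refine ⟨ξ', fun j hj => ?_, h⟩
      rw [hag j (by omega), Function.update_of_ne (by omega)]
    · rintro ⟨ξ', hag, h⟩
      refine ⟨ξ' g, (exGs_char Hs Ts η k (g + 1) F (Function.update ξ g (ξ' g))).mpr
        ⟨ξ', fun j hj => ?_, h⟩⟩
      by_cases hjg : j = g
      · rw [hjg, Function.update_self]
      · rw [Function.update_of_ne hjg, hag j (by omega)]

lemma allGs_char (Hs Ts : Set GAtom) (η : ℕ → ℤ) :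
    ∀ (n : ℕ) (F : S0F) (ξ : ℕ → PTerm),
      ((allGs n F).toProp symv ξ η).htSat Hs Ts ↔
        ∀ ξ' : ℕ → PTerm, (∀ j, n ≤ j → ξ' j = ξ j) → (F.toProp symv ξ' η).htSat Hs Ts
  | 0, F, ξ => by
    constructor
    · intro h ξ' hag
      have : ξ' = ξ := funext fun j => hag j (by omega)
      rwa [this]
    · intro h
      exact h ξ fun _ _ => rfl
  | n + 1, F, ξ => by
    rw [show allGs (n + 1) F = .allG n (allGs n F) from rfl, toProp_allG]
    constructor
    · intro h ξ' hag
      exact (allGs_char Hs Ts η n F (Function.update ξ n (ξ' n))).mp (h (ξ' n)) ξ'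
        (fun j hj => by
          by_cases hjn : j = n
          · rw [hjn, Function.update_self]
          · rw [Function.update_of_ne hjn, hag j (by omega)])
    · intro h d
      refine (allGs_char Hs Ts η n F (Function.update ξ n d)).mpr fun ξ' hag => ?_
      refine h ξ' fun j hj => ?_
      rw [hag j (by omega), Function.update_of_ne (by omega)]


/-! ### substitution congruence for atoms and body elements -/

lemma MAtom.subst_congr (a : MAtom) {σ σ' : ℕ → PTerm}
    (h : ∀ k, k < a.vb → σ k = σ' k) : a.subst σ = a.subst σ' := by
  unfold MAtom.subst
  congr 1
  exact List.map_congr_left fun t ht =>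
    MGT.subst_congr t fun k hk =>
      h k (lt_of_lt_of_le hk (le_foldr_max (List.mem_map_of_mem ht)))

lemma MBodyElem.subst_congr (e : MBodyElem) {σ σ' : ℕ → PTerm}
    (h : ∀ k, k < e.vb → σ k = σ' k) : e.subst σ = e.subst σ' := by
  cases e with
  | lit l =>
    cases l with
    | pos a => simp only [MBodyElem.subst, MLit.subst, MAtom.subst_congr a h]
    | neg a => simp only [MBodyElem.subst, MLit.subst, MAtom.subst_congr a h]
    | nneg a => simp only [MBodyElem.subst, MLit.subst, MAtom.subst_congr a h]
  | cmp c =>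
    simp only [MBodyElem.subst, MComp.subst]
    rw [MGT.subst_congr c.l (fun k hk => h k (lt_of_lt_of_le hk (le_max_left _ _))),
      MGT.subst_congr c.r (fun k hk => h k (lt_of_lt_of_le hk (le_max_right _ _)))]

/-! ### the bridge for literals -/

lemma toProp_bot (v : String → PTerm) (ξ : ℕ → PTerm) (η : ℕ → ℤ) (Hs Ts : Set GAtom) :
    ((S0F.bot).toProp v ξ η).htSat Hs Ts ↔ False := Iff.rfl

lemma lit_bridge (args : List MGT) (g : ℕ) (hvb : ∀ t ∈ args, t.vb ≤ g)
    (ξ : ℕ → PTerm) (η : ℕ → ℤ) (Hs Ts : Set GAtom) (G : S0F) (Q : List PTerm → Prop)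
    (hG : ∀ ξ' : ℕ → PTerm, ((G.toProp symv ξ' η).htSat Hs Ts ↔
      Q ((List.range args.length).map fun k => ξ' (g + k)))) :
    ((exGs g args.length (.and (valsFml args g) G)).toProp symv ξ η).htSat Hs Ts ↔
      ∃ rs ∈ valsList (args.map (MGT.subst ξ)), Q rs := by
  rw [exGs_char]
  constructor
  · rintro ⟨ξ', hag, h⟩
    rw [toProp_and, valsFml_char, hG ξ'] at h
    obtain ⟨h1, h2⟩ := h
    rw [argsmap_congr args g hvb ξ ξ' (fun j hj => hag j (Or.inl hj))] at h1
    exact ⟨_, h1, h2⟩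
  · rintro ⟨rs, h1, h2⟩
    have hlen : rs.length = args.length := by
      have := valsList_length h1
      simpa using this
    obtain ⟨ξ', hag, hL⟩ := map_range_update rs g ξ
    rw [hlen] at hag hL
    refine ⟨ξ', hag, ?_⟩
    rw [toProp_and, valsFml_char, hG ξ',
      argsmap_congr args g hvb ξ ξ' (fun j hj => hag j (Or.inl hj)), hL]
    exact ⟨h1, h2⟩

lemma tauCmp_char (c : MComp) (Hs Ts : Set GAtom) :
    (tauCmp c).htSat Hs Ts ↔ ∃ r1 ∈ c.l.vals, ∃ r2 ∈ c.r.vals, c.rel.holds r1 r2 := by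
  rw [tauCmp]
  split_ifs with h
  · exact iff_of_true (htSat_top _ _) h
  · exact iff_of_false (fun hh => hh) h

lemma tauBody_char (l : List MBodyElem) (Hs Ts : Set GAtom) :
    (tauBody l).htSat Hs Ts ↔ ∀ e ∈ l, (tauBodyElem e).htSat Hs Ts := by
  constructor
  · intro h e he; exact h ⟨e, he⟩
  · intro h e; exact h e.1 e.2

/-! ### τ^B versus τ for body elements -/

lemma tauBF_char (ξ : ℕ → PTerm) (η : ℕ → ℤ) (Hs Ts : Set GAtom)
    (e : MBodyElem) (g : ℕ) (he : e.vb ≤ g) :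
    ((tauBF e g).toProp symv ξ η).htSat Hs Ts ↔
      (tauBodyElem (e.subst ξ)).htSat Hs Ts := by
  cases e with
  | lit l =>
    cases l with
    | pos a =>
      have hargs : ∀ t ∈ a.args, t.vb ≤ g := fun t ht =>
        le_trans (le_foldr_max (List.mem_map_of_mem ht)) he
      rw [show tauBF (.lit (.pos a)) g = exGs g a.args.length
            (.and (valsFml a.args g) (.patom a.p (varsList g a.args.length))) from rfl,
        lit_bridge a.args g hargs ξ η Hs Ts _ (fun rs => (a.p, rs) ∈ Hs)
          (fun ξ' => by rw [toProp_patom, varsList_eval])]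
      show _ ↔ (tauLit (.pos (a.subst ξ))).htSat Hs Ts
      constructor
      · rintro ⟨rs, h1, h2⟩
        exact ⟨⟨rs, h1⟩, h2⟩
      · rintro ⟨⟨rs, h1⟩, h2⟩
        exact ⟨rs, h1, h2⟩
    | neg a =>
      have hargs : ∀ t ∈ a.args, t.vb ≤ g := fun t ht =>
        le_trans (le_foldr_max (List.mem_map_of_mem ht)) he
      rw [show tauBF (.lit (.neg a)) g = exGs g a.args.length
            (.and (valsFml a.args g)
              (S0F.neg (.patom a.p (varsList g a.args.length)))) from rfl,
        lit_bridge a.args g hargs ξ η Hs Ts _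
          (fun rs => ((a.p, rs) ∈ Hs → False) ∧ ((a.p, rs) ∈ Ts → False))
          (fun ξ' => by
            rw [show ((S0F.neg (.patom a.p (varsList g a.args.length))).toProp
                  symv ξ' η).htSat Hs Ts ↔
                (((a.p, (varsList g a.args.length).map (GTm.eval symv ξ' η)) ∈ Hs → False) ∧
                 ((a.p, (varsList g a.args.length).map (GTm.eval symv ξ' η)) ∈ Ts → False))
                from Iff.rfl,
              varsList_eval])]
      show _ ↔ (tauLit (.neg (a.subst ξ))).htSat Hs Ts
      constructor
      · rintro ⟨rs, h1, h2⟩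
        exact ⟨⟨rs, h1⟩, h2⟩
      · rintro ⟨⟨rs, h1⟩, h2⟩
        exact ⟨rs, h1, h2⟩
    | nneg a =>
      have hargs : ∀ t ∈ a.args, t.vb ≤ g := fun t ht =>
        le_trans (le_foldr_max (List.mem_map_of_mem ht)) he
      rw [show tauBF (.lit (.nneg a)) g = exGs g a.args.length
            (.and (valsFml a.args g)
              (S0F.neg (S0F.neg (.patom a.p (varsList g a.args.length))))) from rfl,
        lit_bridge a.args g hargs ξ η Hs Ts _
          (fun rs => ((((a.p, rs) ∈ Hs → False) ∧ ((a.p, rs) ∈ Ts → False)) → False) ∧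
            ((((a.p, rs) ∈ Ts → False) ∧ ((a.p, rs) ∈ Ts → False)) → False))
          (fun ξ' => by
            rw [show ((S0F.neg (S0F.neg (.patom a.p
                    (varsList g a.args.length)))).toProp symv ξ' η).htSat Hs Ts ↔
                (((((a.p, (varsList g a.args.length).map (GTm.eval symv ξ' η)) ∈ Hs → False) ∧
                   ((a.p, (varsList g a.args.length).map (GTm.eval symv ξ' η)) ∈ Ts → False)) →
                    False) ∧
                 ((((a.p, (varsList g a.args.length).map (GTm.eval symv ξ' η)) ∈ Ts → False) ∧
                   ((a.p, (varsList g a.args.length).map (GTm.eval symv ξ' η)) ∈ Ts → False)) →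
                    False))
                from Iff.rfl,
              varsList_eval])]
      show _ ↔ (tauLit (.nneg (a.subst ξ))).htSat Hs Ts
      constructor
      · rintro ⟨rs, h1, h2⟩
        exact ⟨⟨rs, h1⟩, h2⟩
      · rintro ⟨⟨rs, h1⟩, h2⟩
        exact ⟨rs, h1, h2⟩
  | cmp c =>
    have hl : c.l.vb ≤ g := le_trans (le_max_left _ _) he
    have hr : c.r.vb ≤ g := le_trans (le_max_right _ _) he
    rw [show tauBF (.cmp c) g = .exG g (.exG (g+1)
        (.and (valF c.l (.var g) 0) (.and (valF c.r (.var (g+1)) 0)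
          (.cmp c.rel (.var g) (.var (g+1)))))) from rfl, toProp_exG]
    show _ ↔ (tauCmp (c.subst ξ)).htSat Hs Ts
    rw [tauCmp_char]
    constructor
    · rintro ⟨d1, hd⟩
      rw [toProp_exG] at hd
      obtain ⟨d2, hd⟩ := hd
      set ξ2 := Function.update (Function.update ξ g d1) (g+1) d2 with hξ2
      rw [toProp_and, toProp_and, toProp_cmp,
        valF_char ξ2 Hs Ts c.l (.var g) 0 η (fun η' _ => rfl),
        valF_char ξ2 Hs Ts c.r (.var (g+1)) 0 η (fun η' _ => rfl)] at hd
      have u1 : ξ2 g = d1 := by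
        rw [hξ2, Function.update_of_ne (by omega), Function.update_self]
      have u2 : ξ2 (g+1) = d2 := Function.update_self _ _ _
      have s1 : c.l.subst ξ2 = c.l.subst ξ :=
        MGT.subst_congr c.l fun k hk => by
          rw [hξ2, Function.update_of_ne (by omega), Function.update_of_ne (by omega)]
      have s2 : c.r.subst ξ2 = c.r.subst ξ :=
        MGT.subst_congr c.r fun k hk => by
          rw [hξ2, Function.update_of_ne (by omega), Function.update_of_ne (by omega)]
      rw [show GTm.eval symv ξ2 η (.var g) = ξ2 g from rfl,
        show GTm.eval symv ξ2 η (.var (g+1)) = ξ2 (g+1) from rfl, u1, u2, s1, s2] at hd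
      exact ⟨d1, hd.1, d2, hd.2.1, hd.2.2⟩
    · rintro ⟨r1, h1, r2, h2, h3⟩
      refine ⟨r1, ?_⟩
      rw [toProp_exG]
      refine ⟨r2, ?_⟩
      set ξ2 := Function.update (Function.update ξ g r1) (g+1) r2 with hξ2
      rw [toProp_and, toProp_and, toProp_cmp,
        valF_char ξ2 Hs Ts c.l (.var g) 0 η (fun η' _ => rfl),
        valF_char ξ2 Hs Ts c.r (.var (g+1)) 0 η (fun η' _ => rfl)]
      have u1 : ξ2 g = r1 := by
        rw [hξ2, Function.update_of_ne (by omega), Function.update_self]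
      have u2 : ξ2 (g+1) = r2 := Function.update_self _ _ _
      have s1 : c.l.subst ξ2 = c.l.subst ξ :=
        MGT.subst_congr c.l fun k hk => by
          rw [hξ2, Function.update_of_ne (by omega), Function.update_of_ne (by omega)]
      have s2 : c.r.subst ξ2 = c.r.subst ξ :=
        MGT.subst_congr c.r fun k hk => by
          rw [hξ2, Function.update_of_ne (by omega), Function.update_of_ne (by omega)]
      rw [show GTm.eval symv ξ2 η (.var g) = ξ2 g from rfl,
        show GTm.eval symv ξ2 η (.var (g+1)) = ξ2 (g+1) from rfl, u1, u2, s1, s2]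
      exact ⟨h1, h2, h3⟩

lemma tauBodyF_char (ξ : ℕ → PTerm) (η : ℕ → ℤ) (Hs Ts : Set GAtom) :
    ∀ (b : List MBodyElem) (g : ℕ), (∀ e ∈ b, e.vb ≤ g) →
      (((tauBodyF b g).toProp symv ξ η).htSat Hs Ts ↔
        ∀ e ∈ b, (tauBodyElem (e.subst ξ)).htSat Hs Ts)
  | [], g, _ => by
    constructor
    · intro _ e he
      exact absurd he List.not_mem_nil
    · intro _
      exact ⟨id, id⟩
  | e :: b, g, hb => by
    rw [show tauBodyF (e :: b) g = .and (tauBF e g) (tauBodyF b g) from rfl, toProp_and,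
      tauBF_char ξ η Hs Ts e g (hb e (by simp)),
      tauBodyF_char ξ η Hs Ts b g (fun e' he' => hb e' (by simp [he']))]
    simp [List.forall_mem_cons]


/-! ### htSat unfolding for IProp -/

lemma htSat_impl (F G : IProp GAtom) (Hs Ts : Set GAtom) :
    (IProp.impl F G).htSat Hs Ts ↔
      ((F.htSat Hs Ts → G.htSat Hs Ts) ∧ (F.htSat Ts Ts → G.htSat Ts Ts)) := Iff.rfl

lemma toProp_negneg_patom (ξ' : ℕ → PTerm) (η : ℕ → ℤ) (p : String) (ts : List GTm)
    (Hs Ts : Set GAtom) :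
    ((S0F.neg (S0F.neg (.patom p ts))).toProp symv ξ' η).htSat Hs Ts ↔
      (p, ts.map (GTm.eval symv ξ' η)) ∈ Ts := by
  constructor
  · intro h
    by_contra hn
    exact h.2 ⟨fun hb => hn hb, fun hb => hn hb⟩
  · intro hB
    exact ⟨fun hh => (hh.2 hB).elim, fun hh => (hh.1 hB).elim⟩

/-! ### construction of an assignment from a tuple of values -/

lemma build_xi (args : List MGT) (body : List MBodyElem) (b : ℕ)
    (ha : ∀ t ∈ args, t.vb ≤ b) (hb : ∀ e ∈ body, e.vb ≤ b) (ξ σ : ℕ → PTerm)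
    (rs : List PTerm) (hrs : rs ∈ valsList (args.map (MGT.subst σ))) :
    ∃ ξ' : ℕ → PTerm, (∀ j, b + args.length ≤ j → ξ' j = ξ j) ∧
      ((List.range args.length).map fun k => ξ' (b + k)) = rs ∧
      args.map (MGT.subst ξ') = args.map (MGT.subst σ) ∧
      ∀ e ∈ body, e.subst ξ' = e.subst σ := by
  have hlen : rs.length = args.length := by simpa using valsList_length hrs
  obtain ⟨ξ0, hag0, hL0⟩ := map_range_update rs b σ
  rw [hlen] at hag0 hL0
  refine ⟨fun j => if j < b + args.length then ξ0 j else ξ j, fun j hj => ?_, ?_, ?_, ?_⟩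
  · show (if j < b + args.length then ξ0 j else ξ j) = ξ j
    rw [if_neg (by omega)]
  · rw [← hL0]
    apply List.map_congr_left
    intro k hk
    show (if b + k < b + args.length then ξ0 (b + k) else ξ (b + k)) = ξ0 (b + k)
    rw [if_pos (by simp at hk; omega)]
  · refine argsmap_congr args b ha σ _ fun j hj => ?_
    show (if j < b + args.length then ξ0 j else ξ j) = σ j
    rw [if_pos (by omega), hag0 j (Or.inl hj)]
  · intro e he
    refine MBodyElem.subst_congr e fun k hk => ?_
    have hkb : k < b := lt_of_lt_of_le hk (hb e he)
    show (if k < b + args.length then ξ0 k else ξ k) = σ k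
    rw [if_pos (by omega), hag0 k (Or.inl hkb)]

/-! ### the three "level" equivalences -/

lemma level_basic (p : String) (args : List MGT) (body : List MBodyElem) (b : ℕ)
    (ha : ∀ t ∈ args, t.vb ≤ b) (hb : ∀ e ∈ body, e.vb ≤ b)
    (ξ : ℕ → PTerm) (X Y : Set GAtom) :
    (∀ ξ' : ℕ → PTerm, (∀ j, b + args.length ≤ j → ξ' j = ξ j) →
      ((((List.range args.length).map fun k => ξ' (b + k)) ∈
          valsList (args.map (MGT.subst ξ')) ∧
        (∀ e ∈ body, (tauBodyElem (e.subst ξ')).htSat X Y)) →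
        (p, (List.range args.length).map fun k => ξ' (b + k)) ∈ X)) ↔
    (∀ σ : ℕ → PTerm, (∀ e ∈ body, (tauBodyElem (e.subst σ)).htSat X Y) →
      ∀ rs ∈ valsList (args.map (MGT.subst σ)), (p, rs) ∈ X) := by
  constructor
  · intro h σ hbody rs hrs
    obtain ⟨ξ', hag, hL, hsub, hbe⟩ := build_xi args body b ha hb ξ σ rs hrs
    have := h ξ' hag ⟨by rw [hL, hsub]; exact hrs,
      fun e he => by rw [hbe e he]; exact hbody e he⟩
    rwa [hL] at this
  · rintro h ξ' hag ⟨hvals, hbody⟩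
    exact h ξ' hbody _ hvals

lemma level_choice (p : String) (args : List MGT) (body : List MBodyElem) (b : ℕ)
    (ha : ∀ t ∈ args, t.vb ≤ b) (hb : ∀ e ∈ body, e.vb ≤ b)
    (ξ : ℕ → PTerm) (X Y : Set GAtom) :
    (∀ ξ' : ℕ → PTerm, (∀ j, b + args.length ≤ j → ξ' j = ξ j) →
      ((((List.range args.length).map fun k => ξ' (b + k)) ∈
          valsList (args.map (MGT.subst ξ')) ∧
        ((∀ e ∈ body, (tauBodyElem (e.subst ξ')).htSat X Y) ∧
          (p, (List.range args.length).map fun k => ξ' (b + k)) ∈ Y)) →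
        (p, (List.range args.length).map fun k => ξ' (b + k)) ∈ X)) ↔
    (∀ σ : ℕ → PTerm, (∀ e ∈ body, (tauBodyElem (e.subst σ)).htSat X Y) →
      ∀ rs ∈ valsList (args.map (MGT.subst σ)),
        ((p, rs) ∈ X ∨ (((p, rs) ∈ X → False) ∧ ((p, rs) ∈ Y → False)))) := by
  constructor
  · intro h σ hbody rs hrs
    obtain ⟨ξ', hag, hL, hsub, hbe⟩ := build_xi args body b ha hb ξ σ rs hrs
    by_cases hX : (p, rs) ∈ X
    · exact Or.inl hX
    · by_cases hY : (p, rs) ∈ Y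
      · have := h ξ' hag ⟨by rw [hL, hsub]; exact hrs,
          fun e he => by rw [hbe e he]; exact hbody e he, by rw [hL]; exact hY⟩
        rw [hL] at this
        exact Or.inl this
      · exact Or.inr ⟨fun hh => hX hh, fun hh => hY hh⟩
  · rintro h ξ' hag ⟨hvals, hbody, hY⟩
    rcases h ξ' hbody _ hvals with hX | ⟨h1, h2⟩
    · exact hX
    · exact (h2 hY).elim

lemma level_cons (body : List MBodyElem) (b : ℕ) (hb : ∀ e ∈ body, e.vb ≤ b)
    (ξ : ℕ → PTerm) (X Y : Set GAtom) :
    (∀ ξ' : ℕ → PTerm, (∀ j, b ≤ j → ξ' j = ξ j) →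
      ((∀ e ∈ body, (tauBodyElem (e.subst ξ')).htSat X Y) → False)) ↔
    (∀ σ : ℕ → PTerm, (∀ e ∈ body, (tauBodyElem (e.subst σ)).htSat X Y) → False) := by
  constructor
  · intro h σ hbody
    refine h (fun j => if j < b then σ j else ξ j) (fun j hj => ?_) (fun e he => ?_)
    · show (if j < b then σ j else ξ j) = ξ j
      rw [if_neg (by omega)]
    · rw [MBodyElem.subst_congr e (σ' := σ) fun k hk => by
        show (if k < b then σ k else ξ k) = σ k
        rw [if_pos (lt_of_lt_of_le hk (hb e he))]]
      exact hbody e he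
  · intro h ξ' _ hbody
    exact h ξ' hbody

end Aux

/-- For any rule `R`, `(τ*R)^prop` is strongly equivalent to `τR` (the latter, for a
rule with variables, being the conjunction of the translations of all its instances). -/
theorem tauStar_prop_strongEquiv_tau (R : MRule) :
    StrongEquivProp ((tauStar R).toProp symv xi0 eta0)
      (IProp.conj (ℕ → PTerm) fun σ => tauRule (R.subst σ)) := by
  intro Hs Ts _hsub
  have hB : ∀ e ∈ R.body, MBodyElem.vb e ≤ R.vb := fun e he =>
    le_trans (le_foldr_max (List.mem_map_of_mem he)) (le_max_right _ _)
  cases hR : R.head with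
  | basic a =>
    have haR : ∀ t ∈ a.args, t.vb ≤ R.vb := fun t ht =>
      le_trans (le_foldr_max (List.mem_map_of_mem ht))
        (by rw [MRule.vb, hR]; exact le_max_left _ _)
    have hb2 : ∀ e ∈ R.body, MBodyElem.vb e ≤ R.vb + a.args.length := fun e he =>
      le_trans (hB e he) (by omega)
    have hBodyIff : ∀ (σ : ℕ → PTerm) (X Y : Set GAtom),
        (tauBody (R.body.map (MBodyElem.subst σ))).htSat X Y ↔
          ∀ e ∈ R.body, (tauBodyElem (e.subst σ)).htSat X Y := fun σ X Y => by
      rw [tauBody_char]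
      constructor
      · intro h e he; exact h _ (List.mem_map_of_mem he)
      · intro h e' he'
        obtain ⟨e, he, rfl⟩ := List.mem_map.mp he'
        exact h e he
    have hRule : ∀ σ : ℕ → PTerm, (tauRule (R.subst σ)).htSat Hs Ts ↔
        (((∀ e ∈ R.body, (tauBodyElem (e.subst σ)).htSat Hs Ts) →
            ∀ rs ∈ valsList (a.args.map (MGT.subst σ)), (a.p, rs) ∈ Hs) ∧
         ((∀ e ∈ R.body, (tauBodyElem (e.subst σ)).htSat Ts Ts) →
            ∀ rs ∈ valsList (a.args.map (MGT.subst σ)), (a.p, rs) ∈ Ts)) := by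
      intro σ
      have hh : MHead.subst σ R.head = .basic (a.subst σ) := by rw [hR]; rfl
      rw [show tauRule (R.subst σ) = .impl (tauBody (R.body.map (MBodyElem.subst σ)))
          (.conj {rs // rs ∈ valsList (a.args.map (MGT.subst σ))} fun rs =>
            .atom (a.p, rs.1))
          from by simp only [tauRule, MRule.subst, hh, MAtom.subst], htSat_impl]
      have hHead : ∀ X : Set GAtom,
          ((IProp.conj {rs // rs ∈ valsList (a.args.map (MGT.subst σ))} fun rs =>
            IProp.atom (a.p, rs.1)).htSat X Ts) ↔
            ∀ rs ∈ valsList (a.args.map (MGT.subst σ)), (a.p, rs) ∈ X := fun X =>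
        ⟨fun h rs hrs => h ⟨rs, hrs⟩, fun h i => h i.1 i.2⟩
      exact and_congr (imp_congr (hBodyIff σ Hs Ts) (hHead Hs))
        (imp_congr (hBodyIff σ Ts Ts) (hHead Ts))
    have hLHS : ∀ ξ' : ℕ → PTerm,
        (((S0F.imp (.and (valsFml a.args R.vb)
            (tauBodyF R.body (R.vb + a.args.length)))
            (.patom a.p (varsList R.vb a.args.length))).toProp symv ξ' eta0).htSat Hs Ts) ↔
        (((((List.range a.args.length).map fun k => ξ' (R.vb + k)) ∈
              valsList (a.args.map (MGT.subst ξ')) ∧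
            (∀ e ∈ R.body, (tauBodyElem (e.subst ξ')).htSat Hs Ts)) →
            (a.p, (List.range a.args.length).map fun k => ξ' (R.vb + k)) ∈ Hs) ∧
         ((((List.range a.args.length).map fun k => ξ' (R.vb + k)) ∈
              valsList (a.args.map (MGT.subst ξ')) ∧
            (∀ e ∈ R.body, (tauBodyElem (e.subst ξ')).htSat Ts Ts)) →
            (a.p, (List.range a.args.length).map fun k => ξ' (R.vb + k)) ∈ Ts)) := by
      intro ξ'
      rw [toProp_imp, toProp_and, toProp_and,
        valsFml_char ξ' Hs Ts a.args R.vb eta0, valsFml_char ξ' Ts Ts a.args R.vb eta0,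
        tauBodyF_char ξ' eta0 Hs Ts R.body (R.vb + a.args.length) hb2,
        tauBodyF_char ξ' eta0 Ts Ts R.body (R.vb + a.args.length) hb2,
        toProp_patom, toProp_patom, varsList_eval]
      all_goals exact Iff.rfl
    simp only [tauStar, hR]
    rw [allGs_char]
    refine Iff.trans (forall_congr' fun ξ' => imp_congr_right fun _ => hLHS ξ')
      (Iff.trans ?_ (forall_congr' hRule).symm)
    simp only [imp_and, forall_and]
    exact and_congr (level_basic a.p a.args R.body R.vb haR hB xi0 Hs Ts)
      (level_basic a.p a.args R.body R.vb haR hB xi0 Ts Ts)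
  | choice a =>
    have haR : ∀ t ∈ a.args, t.vb ≤ R.vb := fun t ht =>
      le_trans (le_foldr_max (List.mem_map_of_mem ht))
        (by rw [MRule.vb, hR]; exact le_max_left _ _)
    have hb2 : ∀ e ∈ R.body, MBodyElem.vb e ≤ R.vb + a.args.length := fun e he =>
      le_trans (hB e he) (by omega)
    have hBodyIff : ∀ (σ : ℕ → PTerm) (X Y : Set GAtom),
        (tauBody (R.body.map (MBodyElem.subst σ))).htSat X Y ↔
          ∀ e ∈ R.body, (tauBodyElem (e.subst σ)).htSat X Y := fun σ X Y => by
      rw [tauBody_char]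
      constructor
      · intro h e he; exact h _ (List.mem_map_of_mem he)
      · intro h e' he'
        obtain ⟨e, he, rfl⟩ := List.mem_map.mp he'
        exact h e he
    have hRule : ∀ σ : ℕ → PTerm, (tauRule (R.subst σ)).htSat Hs Ts ↔
        (((∀ e ∈ R.body, (tauBodyElem (e.subst σ)).htSat Hs Ts) →
            ∀ rs ∈ valsList (a.args.map (MGT.subst σ)),
              ((a.p, rs) ∈ Hs ∨ (((a.p, rs) ∈ Hs → False) ∧ ((a.p, rs) ∈ Ts → False)))) ∧
         ((∀ e ∈ R.body, (tauBodyElem (e.subst σ)).htSat Ts Ts) →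
            ∀ rs ∈ valsList (a.args.map (MGT.subst σ)),
              ((a.p, rs) ∈ Ts ∨ (((a.p, rs) ∈ Ts → False) ∧ ((a.p, rs) ∈ Ts → False))))) := by
      intro σ
      have hh : MHead.subst σ R.head = .choice (a.subst σ) := by rw [hR]; rfl
      rw [show tauRule (R.subst σ) = .impl (tauBody (R.body.map (MBodyElem.subst σ)))
          (.conj {rs // rs ∈ valsList (a.args.map (MGT.subst σ))} fun rs =>
            .disj Bool fun bb =>
              cond bb (.atom (a.p, rs.1)) (.impl (.atom (a.p, rs.1)) .bot))
          from by simp only [tauRule, MRule.subst, hh, MAtom.subst], htSat_impl]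
      have hHead : ∀ X : Set GAtom,
          ((IProp.conj {rs // rs ∈ valsList (a.args.map (MGT.subst σ))} fun rs =>
            IProp.disj Bool fun bb =>
              cond bb (IProp.atom (a.p, rs.1))
                (IProp.impl (IProp.atom (a.p, rs.1)) IProp.bot)).htSat X Ts) ↔
            ∀ rs ∈ valsList (a.args.map (MGT.subst σ)),
              ((a.p, rs) ∈ X ∨ (((a.p, rs) ∈ X → False) ∧ ((a.p, rs) ∈ Ts → False))) :=
        fun X =>
        ⟨fun h rs hrs => match h ⟨rs, hrs⟩ with
          | ⟨true, hx⟩ => Or.inl hx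
          | ⟨false, hx⟩ => Or.inr hx,
         fun h i => match h i.1 i.2 with
          | Or.inl hx => ⟨true, hx⟩
          | Or.inr hx => ⟨false, hx⟩⟩
      exact and_congr (imp_congr (hBodyIff σ Hs Ts) (hHead Hs))
        (imp_congr (hBodyIff σ Ts Ts) (hHead Ts))
    have hLHS : ∀ ξ' : ℕ → PTerm,
        (((S0F.imp (.and (valsFml a.args R.vb)
            (.and (tauBodyF R.body (R.vb + a.args.length))
              (S0F.neg (S0F.neg (.patom a.p (varsList R.vb a.args.length))))))
            (.patom a.p (varsList R.vb a.args.length))).toProp symv ξ' eta0).htSat Hs Ts) ↔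
        (((((List.range a.args.length).map fun k => ξ' (R.vb + k)) ∈
              valsList (a.args.map (MGT.subst ξ')) ∧
            ((∀ e ∈ R.body, (tauBodyElem (e.subst ξ')).htSat Hs Ts) ∧
              (a.p, (List.range a.args.length).map fun k => ξ' (R.vb + k)) ∈ Ts)) →
            (a.p, (List.range a.args.length).map fun k => ξ' (R.vb + k)) ∈ Hs) ∧
         ((((List.range a.args.length).map fun k => ξ' (R.vb + k)) ∈
              valsList (a.args.map (MGT.subst ξ')) ∧
            ((∀ e ∈ R.body, (tauBodyElem (e.subst ξ')).htSat Ts Ts) ∧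
              (a.p, (List.range a.args.length).map fun k => ξ' (R.vb + k)) ∈ Ts)) →
            (a.p, (List.range a.args.length).map fun k => ξ' (R.vb + k)) ∈ Ts)) := by
      intro ξ'
      rw [toProp_imp, toProp_and, toProp_and, toProp_and, toProp_and,
        toProp_negneg_patom, toProp_negneg_patom,
        valsFml_char ξ' Hs Ts a.args R.vb eta0, valsFml_char ξ' Ts Ts a.args R.vb eta0,
        tauBodyF_char ξ' eta0 Hs Ts R.body (R.vb + a.args.length) hb2,
        tauBodyF_char ξ' eta0 Ts Ts R.body (R.vb + a.args.length) hb2,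
        toProp_patom, toProp_patom, varsList_eval]
      all_goals exact Iff.rfl
    simp only [tauStar, hR]
    rw [allGs_char]
    refine Iff.trans (forall_congr' fun ξ' => imp_congr_right fun _ => hLHS ξ')
      (Iff.trans ?_ (forall_congr' hRule).symm)
    simp only [imp_and, forall_and]
    exact and_congr (level_choice a.p a.args R.body R.vb haR hB xi0 Hs Ts)
      (level_choice a.p a.args R.body R.vb haR hB xi0 Ts Ts)
  | cons =>
    have hBodyIff : ∀ (σ : ℕ → PTerm) (X Y : Set GAtom),
        (tauBody (R.body.map (MBodyElem.subst σ))).htSat X Y ↔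
          ∀ e ∈ R.body, (tauBodyElem (e.subst σ)).htSat X Y := fun σ X Y => by
      rw [tauBody_char]
      constructor
      · intro h e he; exact h _ (List.mem_map_of_mem he)
      · intro h e' he'
        obtain ⟨e, he, rfl⟩ := List.mem_map.mp he'
        exact h e he
    have hRule : ∀ σ : ℕ → PTerm, (tauRule (R.subst σ)).htSat Hs Ts ↔
        (((∀ e ∈ R.body, (tauBodyElem (e.subst σ)).htSat Hs Ts) → False) ∧
         ((∀ e ∈ R.body, (tauBodyElem (e.subst σ)).htSat Ts Ts) → False)) := by
      intro σ
      have hh : MHead.subst σ R.head = .cons := by rw [hR]; rfl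
      rw [show tauRule (R.subst σ) = .impl (tauBody (R.body.map (MBodyElem.subst σ)))
          IProp.bot from by simp only [tauRule, MRule.subst, hh], htSat_impl]
      exact and_congr (imp_congr (hBodyIff σ Hs Ts) Iff.rfl)
        (imp_congr (hBodyIff σ Ts Ts) Iff.rfl)
    have hLHS : ∀ ξ' : ℕ → PTerm,
        (((S0F.imp (tauBodyF R.body R.vb) .bot).toProp symv ξ' eta0).htSat Hs Ts) ↔
        (((∀ e ∈ R.body, (tauBodyElem (e.subst ξ')).htSat Hs Ts) → False) ∧
         ((∀ e ∈ R.body, (tauBodyElem (e.subst ξ')).htSat Ts Ts) → False)) := by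
      intro ξ'
      rw [toProp_imp, tauBodyF_char ξ' eta0 Hs Ts R.body R.vb hB,
        tauBodyF_char ξ' eta0 Ts Ts R.body R.vb hB]
      all_goals exact Iff.rfl
    simp only [tauStar, hR]
    rw [allGs_char]
    refine Iff.trans (forall_congr' fun ξ' => imp_congr_right fun _ => hLHS ξ')
      (Iff.trans ?_ (forall_congr' hRule).symm)
    simp only [imp_and, forall_and]
    exact and_congr (level_cons R.body R.vb hB xi0 Hs Ts)
      (level_cons R.body R.vb hB xi0 Ts Ts)
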